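/- arXiv:2005.13758 — 6 statements merged into one kernel-verified Lean document; each statement's English description precedes it below -/
import Mathlib

section
/- Let 0 < α < β and p ∈ [1,∞). Then for every x ∈ E one has (∫_E r_α(x,y)^p μ(dy))^{1/p} ≤ (β/α) · sup_{z∈E} (∫_E r_β(z,y)^p μ(dy))^{1/p}. -/
/-!
The resolvent equation `r_α(x, y) = r_β(x, y) + (β - α) ∫ r_α(x, z) r_β(z, y) m(dz)` reduces the
claim to the bound `(β - α) / α · S` on the `L^p(μ)`-norm of the second term, where `S` is the
supremum on the right. Since `∫ r_α(x, z) m(dz) ≤ 1 / α` by the sub-Markov property, Minkowski's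
integral inequality gives exactly this, and `1 + (β - α) / α = β / α`.
-/

open MeasureTheory ENNReal Set Filter

/-- The α-order heatResolvent kernel of a heat kernel `P`. -/
noncomputable def heatResolvent {E : Type*} [MeasurableSpace E]
    (P : ℝ → E → E → ℝ≥0∞) (α : ℝ) (x y : E) : ℝ≥0∞ :=
  ∫⁻ t in Set.Ioi (0:ℝ), ENNReal.ofReal (Real.exp (-(α * t))) * P t x y

theorem exp_neg_mul_sub_exp_neg_mul (α β t : ℝ) :
    Real.exp (-(α * t)) - Real.exp (-(β * t))
      = (β - α) * ∫ s in (0:ℝ)..t, Real.exp (-(α * s)) * Real.exp (-(β * (t - s))) := by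
  have hderiv : ∀ s ∈ uIcc 0 t,
      HasDerivAt (fun s => Real.exp (-(α * s)) * Real.exp (-(β * (t - s))))
      ((β - α) * (Real.exp (-(α * s)) * Real.exp (-(β * (t - s))))) s := by
    intro s _
    convert (((hasDerivAt_id' s).const_mul (β - α)).sub_const (β * t)).exp using 1
    · ext s; rw [← Real.exp_add]; ring_nf
    · rw [← Real.exp_add]; ring_nf
  rw [← intervalIntegral.integral_const_mul, intervalIntegral.integral_eq_sub_of_hasDerivAt hderiv
    (Continuous.intervalIntegrable (by fun_prop) _ _)]
  simp

theorem ofReal_exp_neg_mul_eq_add {α β t : ℝ} (hαβ : α ≤ β) (ht : 0 ≤ t) :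
    ENNReal.ofReal (Real.exp (-(α * t))) = ENNReal.ofReal (Real.exp (-(β * t)))
      + ENNReal.ofReal (β - α) * ∫⁻ s in Ioo 0 t,
          ENNReal.ofReal (Real.exp (-(α * s))) * ENNReal.ofReal (Real.exp (-(β * (t - s)))) := by
  have hle : Real.exp (-(β * t)) ≤ Real.exp (-(α * t)) := by gcongr
  simp_rw [← ENNReal.ofReal_mul (Real.exp_nonneg _)]
  rw [← ofReal_integral_eq_lintegral_ofReal
      ((Continuous.integrableOn_Icc (by fun_prop)).mono_set Ioo_subset_Icc_self)
      (ae_of_all _ fun _ => by positivity),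
    ← integral_Ioc_eq_integral_Ioo, ← intervalIntegral.integral_of_le ht,
    ← ENNReal.ofReal_mul (by linarith), ← exp_neg_mul_sub_exp_neg_mul,
    ← ENNReal.ofReal_add (Real.exp_nonneg _) (by linarith), add_sub_cancel]

theorem lintegral_Ioi_lintegral_Ioi_add {F : ℝ × ℝ → ℝ≥0∞} (hF : Measurable F) :
    ∫⁻ s in Ioi 0, ∫⁻ u in Ioi 0, F (s, s + u) = ∫⁻ t in Ioi 0, ∫⁻ s in Ioo 0 t, F (s, t) := by
  have hshift : ∀ s, ∫⁻ u in Ioi 0, F (s, s + u) = ∫⁻ t in Ioi s, F (s, t) := by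
    intro s
    rw [← lintegral_indicator measurableSet_Ioi, ← lintegral_indicator measurableSet_Ioi,
      ← lintegral_add_left_eq_self (fun t => (Ioi s).indicator (fun t => F (s, t)) t) s]
    congr with u
    simp [indicator_apply]
  let T : Set (ℝ × ℝ) := {q | 0 < q.1 ∧ q.1 < q.2}
  have hT : MeasurableSet T := (measurableSet_lt measurable_const measurable_fst).inter
    (measurableSet_lt measurable_fst measurable_snd)
  calc ∫⁻ s in Ioi 0, ∫⁻ u in Ioi 0, F (s, s + u)
      = ∫⁻ s, ∫⁻ t, T.indicator F (s, t) := by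
        simp_rw [hshift]
        rw [← lintegral_indicator measurableSet_Ioi]
        congr with s
        by_cases hs : 0 < s <;>
          simp [hs, T, indicator_apply, ← lintegral_indicator measurableSet_Ioi]
    _ = ∫⁻ t, ∫⁻ s, T.indicator F (s, t) :=
        lintegral_lintegral_swap (hF.indicator hT).aemeasurable
    _ = ∫⁻ t in Ioi 0, ∫⁻ s in Ioo 0 t, F (s, t) := by
        rw [← lintegral_indicator measurableSet_Ioi]
        congr with t
        by_cases ht : 0 < t
        · simp [ht, T, indicator_apply, ← lintegral_indicator measurableSet_Ioo]
        · have hzero : ∀ s, T.indicator F (s, t) = 0 :=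
            fun s => indicator_of_notMem (fun h => ht (h.1.trans h.2)) _
          simp [ht, hzero]

theorem lintegral_Lp_const_mul {X : Type*} [MeasurableSpace X] {μ : Measure X} {p : ℝ} (hp : 0 < p)
    (c : ℝ≥0∞) {f : X → ℝ≥0∞} (hf : Measurable f) :
    (∫⁻ y, (c * f y) ^ p ∂μ) ^ (1 / p) = c * (∫⁻ y, f y ^ p ∂μ) ^ (1 / p) := by
  simp_rw [ENNReal.mul_rpow_of_nonneg _ _ hp.le]
  rw [lintegral_const_mul _ (hf.pow_const p), ENNReal.mul_rpow_of_nonneg _ _ (by positivity),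
    ← ENNReal.rpow_mul, mul_one_div_cancel hp.ne', ENNReal.rpow_one]

theorem lintegral_mul_rpow_le {Ω : Type*} [MeasurableSpace Ω] (ν : Measure Ω) {p : ℝ} (hp : 1 ≤ p)
    {W g : Ω → ℝ≥0∞} (hW : Measurable W) (hg : Measurable g) :
    (∫⁻ ω, W ω * g ω ∂ν) ^ p ≤ (∫⁻ ω, W ω ∂ν) ^ (p - 1) * ∫⁻ ω, W ω * g ω ^ p ∂ν := by
  rcases hp.eq_or_lt with rfl | hp1
  · simp
  have hpq := Real.HolderConjugate.conjExponent hp1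
  set q := p.conjExponent
  have hp0 : 0 < p := hpq.pos
  have hq0 : 0 < q := hpq.symm.pos
  -- Hölder's inequality for the factorisation `W g = (W ^ (1/p) g) * W ^ (1/q)`
  have holder := ENNReal.lintegral_mul_le_Lp_mul_Lq ν hpq
    ((hW.pow_const (1 / p)).mul hg).aemeasurable (hW.pow_const (1 / q)).aemeasurable
  have hprod : ∀ ω, W ω ^ (1 / p) * g ω * W ω ^ (1 / q) = W ω * g ω := fun ω => by
    rw [mul_right_comm, ← ENNReal.rpow_add_of_nonneg _ _ (by positivity) (by positivity),
      hpq.one_div_add_one_div, div_one, ENNReal.rpow_one]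
  have hfst : ∀ ω, (W ω ^ (1 / p) * g ω) ^ p = W ω * g ω ^ p := fun ω => by
    rw [ENNReal.mul_rpow_of_nonneg _ _ hp0.le, ← ENNReal.rpow_mul, one_div_mul_cancel hp0.ne',
      ENNReal.rpow_one]
  have hsnd : ∀ ω, (W ω ^ (1 / q)) ^ q = W ω := fun ω => by
    rw [← ENNReal.rpow_mul, one_div_mul_cancel hq0.ne', ENNReal.rpow_one]
  simp only [Pi.mul_apply, hprod, hfst, hsnd] at holder
  calc (∫⁻ ω, W ω * g ω ∂ν) ^ p
      ≤ ((∫⁻ ω, W ω * g ω ^ p ∂ν) ^ (1 / p) * (∫⁻ ω, W ω ∂ν) ^ (1 / q)) ^ p := by gcongr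
    _ = (∫⁻ ω, W ω ∂ν) ^ (p - 1) * ∫⁻ ω, W ω * g ω ^ p ∂ν := by
      rw [ENNReal.mul_rpow_of_nonneg _ _ hp0.le, ← ENNReal.rpow_mul, ← ENNReal.rpow_mul,
        one_div_mul_cancel hp0.ne', ENNReal.rpow_one, one_div_mul_eq_div, hpq.div_conj_eq_sub_one,
        mul_comm]

theorem lintegral_Lp_lintegral_mul_le {X Ω : Type*} [MeasurableSpace X] [MeasurableSpace Ω]
    {μ : Measure X} {ν : Measure Ω} [SFinite μ] [SFinite ν] {p : ℝ} (hp : 1 ≤ p)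
    {W : Ω → ℝ≥0∞} {K : Ω → X → ℝ≥0∞} (hW : Measurable W) (hK : Measurable (Function.uncurry K)) :
    (∫⁻ y, (∫⁻ ω, W ω * K ω y ∂ν) ^ p ∂μ) ^ (1 / p)
      ≤ (∫⁻ ω, W ω ∂ν) * ⨆ ω, (∫⁻ y, K ω y ^ p ∂μ) ^ (1 / p) := by
  have hp0 : 0 < p := zero_lt_one.trans_le hp
  set M := ⨆ ω, (∫⁻ y, K ω y ^ p ∂μ) ^ (1 / p)
  have hKM : ∀ ω, ∫⁻ y, K ω y ^ p ∂μ ≤ M ^ p := fun ω => by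
    rw [← ENNReal.rpow_le_rpow_iff (one_div_pos.2 hp0), ← ENNReal.rpow_mul,
      mul_one_div_cancel hp0.ne', ENNReal.rpow_one]
    exact le_iSup (fun ω => (∫⁻ y, K ω y ^ p ∂μ) ^ (1 / p)) ω
  set C := ∫⁻ ω, W ω ∂ν
  have hint : ∫⁻ y, (∫⁻ ω, W ω * K ω y ∂ν) ^ p ∂μ ≤ (C * M) ^ p :=
    calc ∫⁻ y, (∫⁻ ω, W ω * K ω y ∂ν) ^ p ∂μ
        ≤ ∫⁻ y, C ^ (p - 1) * ∫⁻ ω, W ω * K ω y ^ p ∂ν ∂μ :=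
          lintegral_mono fun y => lintegral_mul_rpow_le ν hp hW hK.of_uncurry_right
      _ = C ^ (p - 1) * ∫⁻ ω, W ω * ∫⁻ y, K ω y ^ p ∂μ ∂ν := by
          have hF : Measurable (Function.uncurry fun y ω => W ω * K ω y ^ p) :=
            (hW.comp measurable_snd).mul ((hK.comp measurable_swap).pow_const p)
          have hFy : Measurable fun y => ∫⁻ ω, W ω * K ω y ^ p ∂ν := hF.lintegral_prod_right'
          rw [lintegral_const_mul _ hFy, lintegral_lintegral_swap hF.aemeasurable]
          simp_rw [lintegral_const_mul _ (hK.of_uncurry_left.pow_const p)]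
      _ ≤ C ^ (p - 1) * ∫⁻ ω, W ω * M ^ p ∂ν := by gcongr with ω; exact hKM ω
      _ = (C * M) ^ p := by
          rw [lintegral_mul_const _ hW, ← mul_assoc, ENNReal.mul_rpow_of_nonneg _ _ hp0.le]
          congr 1
          change C ^ (p - 1) * C = C ^ p
          nth_rw 2 [← ENNReal.rpow_one C]
          rw [← ENNReal.rpow_add_of_nonneg _ _ (by linarith) zero_le_one, sub_add_cancel]
  calc (∫⁻ y, (∫⁻ ω, W ω * K ω y ∂ν) ^ p ∂μ) ^ (1 / p) ≤ ((C * M) ^ p) ^ (1 / p) := by gcongr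
    _ = C * M := by rw [← ENNReal.rpow_mul, mul_one_div_cancel hp0.ne', ENNReal.rpow_one]

theorem sigmaFinite_restrict_ne_zero_of_lintegral_ne_top {X : Type*} [MeasurableSpace X]
    {μ : Measure X} {g : X → ℝ≥0∞} (hg : Measurable g) (hint : ∫⁻ y, g y ∂μ ≠ ∞) :
    SigmaFinite (μ.restrict {y | g y ≠ 0}) := by
  have hB : MeasurableSet {y | g y ≠ 0} := (measurableSet_singleton 0).preimage hg |>.compl
  refine Measure.sigmaFinite_of_countable
    (S := insert {y | g y = 0} (range fun n : ℕ => {y | ((n : ℝ≥0∞) + 1)⁻¹ ≤ g y}))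
    ((countable_range _).insert _) ?_ ?_
  · rintro _ (rfl | ⟨n, rfl⟩)
    · rw [Measure.restrict_apply' hB, ← ofPred_and]
      simp
    · refine (Measure.restrict_apply_le _ _).trans_lt ?_
      exact (meas_ge_le_lintegral_div hg.aemeasurable (by simp) (by simp)).trans_lt
        (ENNReal.div_lt_top hint (by simp))
  · refine eq_univ_of_forall fun y => ?_
    by_cases hy : g y = 0
    · exact mem_sUnion_of_mem hy (mem_insert _ _)
    · obtain ⟨n, hn⟩ := ENNReal.exists_inv_nat_lt hy
      refine mem_sUnion_of_mem ?_ (mem_insert_of_mem _ ⟨n, rfl⟩)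
      exact le_trans (ENNReal.inv_le_inv.2 le_self_add) hn.le

section HeatKernel

variable {E : Type*} [MeasurableSpace E] {P : ℝ → E → E → ℝ≥0∞}

theorem measurable_heatKernel_comp (hP : Measurable fun q : ℝ × E × E => P q.1 q.2.1 q.2.2)
    {X : Type*} [MeasurableSpace X] {f : X → ℝ} {g h : X → E} (hf : Measurable f)
    (hg : Measurable g) (hh : Measurable h) : Measurable fun a => P (f a) (g a) (h a) :=
  hP.comp (hf.prodMk (hg.prodMk hh))

theorem measurable_heatResolvent (hP : Measurable fun q : ℝ × E × E => P q.1 q.2.1 q.2.2)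
    (γ : ℝ) : Measurable fun q : E × E => heatResolvent P γ q.1 q.2 := by
  have := measurable_heatKernel_comp hP measurable_snd (measurable_fst.comp measurable_fst)
    (measurable_snd.comp measurable_fst)
  exact Measurable.lintegral_prod_right
    (f := fun (q : E × E) t => ENNReal.ofReal (Real.exp (-(γ * t))) * P t q.1 q.2) (by fun_prop)

theorem heatResolvent_eq_zero_iff (hP : Measurable fun q : ℝ × E × E => P q.1 q.2.1 q.2.2)
    (γ : ℝ) (x y : E) :
    heatResolvent P γ x y = 0 ↔ ∀ᵐ t ∂volume.restrict (Ioi 0), P t x y = 0 := by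
  have := measurable_heatKernel_comp hP measurable_id measurable_const (measurable_const (a := y))
    (X := ℝ) (g := fun _ => x)
  rw [heatResolvent, lintegral_eq_zero_iff (by fun_prop)]
  simp [EventuallyEq, fun t : ℝ => (Real.exp_pos t).not_ge]

theorem lintegral_heatResolvent_le {m : Measure E} [SFinite m]
    (hP : Measurable fun q : ℝ × E × E => P q.1 q.2.1 q.2.2)
    (hsub : ∀ t > (0:ℝ), ∀ x : E, ∫⁻ y, P t x y ∂m ≤ 1) {γ : ℝ} (hγ : 0 < γ) (x : E) :
    ∫⁻ y, heatResolvent P γ x y ∂m ≤ ENNReal.ofReal (1 / γ) := by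
  have := measurable_heatKernel_comp hP measurable_snd measurable_const measurable_fst
    (X := E × ℝ) (g := fun _ => x)
  calc ∫⁻ y, heatResolvent P γ x y ∂m
      = ∫⁻ t in Ioi 0, ENNReal.ofReal (Real.exp (-(γ * t))) * ∫⁻ y, P t x y ∂m := by
        simp_rw [heatResolvent]
        rw [lintegral_lintegral_swap (by fun_prop)]
        refine lintegral_congr fun t => lintegral_const_mul _ ?_
        exact measurable_heatKernel_comp hP measurable_const measurable_const measurable_id
    _ ≤ ∫⁻ t in Ioi 0, ENNReal.ofReal (Real.exp (-(γ * t))) :=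
        setLIntegral_mono (by fun_prop) fun t ht => mul_le_of_le_one_right' (hsub t ht x)
    _ = ENNReal.ofReal (1 / γ) := by
        rw [← ofReal_integral_eq_lintegral_ofReal (by
          have h := integrableOn_exp_mul_Ioi (neg_neg_of_pos hγ) 0
          simp only [neg_mul] at h
          exact h)
          (ae_of_all _ fun _ => by positivity)]
        simp_rw [← neg_mul]
        rw [integral_exp_mul_Ioi (neg_neg_of_pos hγ)]
        simp

theorem lintegral_heatResolvent_mul_heatResolvent {m : Measure E} [SFinite m]
    (hP : Measurable fun q : ℝ × E × E => P q.1 q.2.1 q.2.2)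
    (hck : ∀ s > (0:ℝ), ∀ t > (0:ℝ), ∀ x y : E, P (t + s) x y = ∫⁻ z, P t x z * P s z y ∂m)
    (α β : ℝ) (x y : E) :
    ∫⁻ z, heatResolvent P α x z * heatResolvent P β z y ∂m
      = ∫⁻ s in Ioi 0, ∫⁻ u in Ioi 0, ENNReal.ofReal (Real.exp (-(α * s)))
          * ENNReal.ofReal (Real.exp (-(β * u))) * P (s + u) x y := by
  let G : E × ℝ × ℝ → ℝ≥0∞ := fun q => ENNReal.ofReal (Real.exp (-(α * q.2.1))) * P q.2.1 x q.1
    * (ENNReal.ofReal (Real.exp (-(β * q.2.2))) * P q.2.2 q.1 y)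
  have hG : Measurable G := by
    have := measurable_heatKernel_comp hP (f := fun q : E × ℝ × ℝ => q.2.1) (by fun_prop)
      measurable_const measurable_fst (g := fun _ => x)
    have := measurable_heatKernel_comp hP (f := fun q : E × ℝ × ℝ => q.2.2) (by fun_prop)
      measurable_fst measurable_const (h := fun _ => y)
    fun_prop
  calc ∫⁻ z, heatResolvent P α x z * heatResolvent P β z y ∂m
      = ∫⁻ z, (∫⁻ s in Ioi 0, ∫⁻ u in Ioi 0, G (z, s, u)) ∂m := by
        refine lintegral_congr fun z => (lintegral_lintegral_mul ?_ ?_).symm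
        · have := measurable_heatKernel_comp hP measurable_id measurable_const measurable_const
            (g := fun _ => x) (h := fun _ => z)
          fun_prop
        · have := measurable_heatKernel_comp hP measurable_id measurable_const measurable_const
            (g := fun _ => z) (h := fun _ => y)
          fun_prop
    _ = ∫⁻ s in Ioi 0, ∫⁻ z, (∫⁻ u in Ioi 0, G (z, s, u)) ∂m :=
        lintegral_lintegral_swap (hG.comp (by fun_prop :
          Measurable fun q : (E × ℝ) × ℝ => (q.1.1, q.1.2, q.2))).lintegral_prod_right'.aemeasurable
    _ = ∫⁻ s in Ioi 0, ∫⁻ u in Ioi 0, ∫⁻ z, G (z, s, u) ∂m :=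
        lintegral_congr fun s => lintegral_lintegral_swap
          (hG.comp (by fun_prop : Measurable fun q : E × ℝ => (q.1, s, q.2))).aemeasurable
    _ = _ := by
        refine setLIntegral_congr_fun measurableSet_Ioi fun s hs => ?_
        refine setLIntegral_congr_fun measurableSet_Ioi fun u hu => ?_
        rw [hck u hu s hs, ← lintegral_const_mul]
        · congr with z
          ring
        · exact (measurable_heatKernel_comp hP measurable_const measurable_const measurable_id).mul
            (measurable_heatKernel_comp hP measurable_const measurable_id measurable_const)

theorem heatResolvent_eq_add_lintegral {m : Measure E} [SFinite m]
    (hP : Measurable fun q : ℝ × E × E => P q.1 q.2.1 q.2.2)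
    (hck : ∀ s > (0:ℝ), ∀ t > (0:ℝ), ∀ x y : E, P (t + s) x y = ∫⁻ z, P t x z * P s z y ∂m)
    {α β : ℝ} (hαβ : α ≤ β) (x y : E) :
    heatResolvent P α x y = heatResolvent P β x y
      + ENNReal.ofReal (β - α) * ∫⁻ z, heatResolvent P α x z * heatResolvent P β z y ∂m := by
  have hPt : Measurable fun t => P t x y :=
    measurable_heatKernel_comp hP measurable_id measurable_const measurable_const
  have hconv : ∫⁻ s in Ioi 0, ∫⁻ u in Ioi 0, ENNReal.ofReal (Real.exp (-(α * s)))
        * ENNReal.ofReal (Real.exp (-(β * u))) * P (s + u) x y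
      = ∫⁻ t in Ioi 0, (∫⁻ s in Ioo 0 t, ENNReal.ofReal (Real.exp (-(α * s)))
          * ENNReal.ofReal (Real.exp (-(β * (t - s))))) * P t x y := by
    have h := lintegral_Ioi_lintegral_Ioi_add (F := fun q => ENNReal.ofReal (Real.exp (-(α * q.1)))
      * ENNReal.ofReal (Real.exp (-(β * (q.2 - q.1)))) * P q.2 x y) (by fun_prop)
    simp only [add_sub_cancel_left] at h
    rw [h]
    exact lintegral_congr fun t => lintegral_mul_const _ (by fun_prop)
  rw [lintegral_heatResolvent_mul_heatResolvent hP hck, hconv,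
    ← lintegral_const_mul' _ _ ofReal_ne_top, heatResolvent, heatResolvent,
    ← lintegral_add_left (by fun_prop)]
  refine setLIntegral_congr_fun measurableSet_Ioi fun t ht => ?_
  rw [ofReal_exp_neg_mul_eq_add hαβ (le_of_lt ht)]
  ring

end HeatKernel

theorem lintegral_heatResolvent_rpow_le {E : Type*} [MeasurableSpace E] {m μ : Measure E}
    [SFinite m] [SFinite μ] {P : ℝ → E → E → ℝ≥0∞}
    (hP : Measurable fun q : ℝ × E × E => P q.1 q.2.1 q.2.2)
    (hck : ∀ s > (0:ℝ), ∀ t > (0:ℝ), ∀ x y : E, P (t + s) x y = ∫⁻ z, P t x z * P s z y ∂m)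
    (hsub : ∀ t > (0:ℝ), ∀ x : E, ∫⁻ y, P t x y ∂m ≤ 1)
    {p : ℝ} (hp : 1 ≤ p) {α β : ℝ} (hα : 0 < α) (hαβ : α < β) (x : E) :
    (∫⁻ y, heatResolvent P α x y ^ p ∂μ) ^ (1 / p)
      ≤ ENNReal.ofReal (β / α) * ⨆ z, (∫⁻ y, heatResolvent P β z y ^ p ∂μ) ^ (1 / p) := by
  have hp0 : 0 < p := zero_lt_one.trans_le hp
  set S := ⨆ z, (∫⁻ y, heatResolvent P β z y ^ p ∂μ) ^ (1 / p)
  have hr : ∀ γ z, Measurable fun y => heatResolvent P γ z y := fun γ z =>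
    (measurable_heatResolvent hP γ).comp (measurable_const.prodMk measurable_id)
  set conv := fun y => ∫⁻ z, heatResolvent P α x z * heatResolvent P β z y ∂m
  have hconv_meas : Measurable conv :=
    (((hr α x).comp measurable_fst).mul (measurable_heatResolvent hP β)).lintegral_prod_left'
  have hconv : (∫⁻ y, conv y ^ p ∂μ) ^ (1 / p) ≤ ENNReal.ofReal (1 / α) * S :=
    (lintegral_Lp_lintegral_mul_le hp (hr α x) (measurable_heatResolvent hP β)).trans
      (by gcongr; exact lintegral_heatResolvent_le hP hsub hα x)
  calc (∫⁻ y, heatResolvent P α x y ^ p ∂μ) ^ (1 / p)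
      = (∫⁻ y, (heatResolvent P β x y + ENNReal.ofReal (β - α) * conv y) ^ p ∂μ) ^ (1 / p) := by
        simp only [conv, ← heatResolvent_eq_add_lintegral hP hck hαβ.le]
    _ ≤ (∫⁻ y, heatResolvent P β x y ^ p ∂μ) ^ (1 / p)
          + (∫⁻ y, (ENNReal.ofReal (β - α) * conv y) ^ p ∂μ) ^ (1 / p) :=
        ENNReal.lintegral_Lp_add_le (hr β x).aemeasurable (hconv_meas.const_mul _).aemeasurable hp
    _ ≤ S + ENNReal.ofReal (β - α) * (ENNReal.ofReal (1 / α) * S) := by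
        rw [lintegral_Lp_const_mul hp0 _ hconv_meas]
        gcongr
        exact le_iSup (fun z => (∫⁻ y, heatResolvent P β z y ^ p ∂μ) ^ (1 / p)) x
    _ = ENNReal.ofReal (β / α) * S := by
        rw [← mul_assoc, ← ENNReal.ofReal_mul (by linarith), ← one_add_mul, ← ENNReal.ofReal_one,
          ← ENNReal.ofReal_add zero_le_one (by positivity)]
        congr 2
        field_simp
        ring

theorem stmt_0_general {E : Type*} [MeasurableSpace E] (m μ : Measure E) [SigmaFinite m]
    (P : ℝ → E → E → ℝ≥0∞)
    (hmeas : Measurable (fun q : ℝ × E × E => P q.1 q.2.1 q.2.2))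
    (hck : ∀ s > (0:ℝ), ∀ t > (0:ℝ), ∀ x y : E,
      P (t + s) x y = ∫⁻ z, P t x z * P s z y ∂m)
    (hsub : ∀ t > (0:ℝ), ∀ x : E, ∫⁻ y, P t x y ∂m ≤ 1)
    (p : ℝ) (hp : 1 ≤ p) (α β : ℝ) (hα : 0 < α) (hαβ : α < β) (x : E) :
    (∫⁻ y, heatResolvent P α x y ^ p ∂μ) ^ (1/p)
      ≤ ENNReal.ofReal (β / α) *
        ⨆ z : E, (∫⁻ y, heatResolvent P β z y ^ p ∂μ) ^ (1/p) := by
  have hp0 : 0 < p := zero_lt_one.trans_le hp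
  set S := ⨆ z : E, (∫⁻ y, heatResolvent P β z y ^ p ∂μ) ^ (1/p)
  by_cases hS : S = ∞
  · rw [hS, ENNReal.mul_top (by simpa using div_pos (hα.trans hαβ) hα)]
    exact le_top
  -- Tonelli's theorem needs an s-finite `μ`; as `S < ∞`, `μ` is σ-finite on the support of
  -- `r_β(x, ·)`, which contains the support of `r_α(x, ·)`.
  have hfin : ∫⁻ y, heatResolvent P β x y ^ p ∂μ ≠ ∞ := by
    refine fun h => hS (top_le_iff.1 ?_)
    calc ∞ = (∫⁻ y, heatResolvent P β x y ^ p ∂μ) ^ (1/p) := by simp [h, hp0]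
      _ ≤ S := le_iSup (fun z => (∫⁻ y, heatResolvent P β z y ^ p ∂μ) ^ (1/p)) x
  have : SigmaFinite (μ.restrict {y | heatResolvent P β x y ^ p ≠ 0}) :=
    sigmaFinite_restrict_ne_zero_of_lintegral_ne_top (((measurable_heatResolvent hmeas β).comp
      (measurable_const.prodMk measurable_id)).pow_const p) hfin
  have hsupp : (fun y => heatResolvent P α x y ^ p).support
      ⊆ {y | heatResolvent P β x y ^ p ≠ 0} := by
    intro y
    simp [ENNReal.rpow_eq_zero_iff, hp0, not_lt_of_gt hp0, heatResolvent_eq_zero_iff hmeas]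
  calc (∫⁻ y, heatResolvent P α x y ^ p ∂μ) ^ (1/p)
      = (∫⁻ y in {y | heatResolvent P β x y ^ p ≠ 0}, heatResolvent P α x y ^ p ∂μ) ^ (1/p) := by
        rw [setLIntegral_eq_of_support_subset hsupp]
    _ ≤ ENNReal.ofReal (β / α) * ⨆ z : E,
          (∫⁻ y in {y | heatResolvent P β x y ^ p ≠ 0}, heatResolvent P β z y ^ p ∂μ) ^ (1/p) :=
        lintegral_heatResolvent_rpow_le hmeas hck hsub hp hα hαβ x
    _ ≤ ENNReal.ofReal (β / α) * S := by
        gcongr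
        exact iSup_mono fun z => by gcongr; exact Measure.restrict_le_self

theorem stmt_0 {E : Type*} [MeasurableSpace E] (m μ : Measure E) [SigmaFinite m]
    (P : ℝ → E → E → ℝ≥0∞)
    (hmeas : Measurable (fun q : ℝ × E × E => P q.1 q.2.1 q.2.2))
    (hsymm : ∀ t > (0:ℝ), ∀ x y : E, P t x y = P t y x)
    (hck : ∀ s > (0:ℝ), ∀ t > (0:ℝ), ∀ x y : E,
      P (t + s) x y = ∫⁻ z, P t x z * P s z y ∂m)
    (hsub : ∀ t > (0:ℝ), ∀ x : E, ∫⁻ y, P t x y ∂m ≤ 1)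
    (p : ℝ) (hp : 1 ≤ p) (α β : ℝ) (hα : 0 < α) (hαβ : α < β) (x : E) :
    (∫⁻ y, heatResolvent P α x y ^ p ∂μ) ^ (1/p)
      ≤ ENNReal.ofReal (β / α) *
        ⨆ z : E, (∫⁻ y, heatResolvent P β z y ^ p ∂μ) ^ (1/p) :=
  stmt_0_general m μ P hmeas hck hsub p hp α β hα hαβ x
end

section
/- Let p ∈ [1,∞). For all a, t > 0 and every x ∈ E one has ∫_E (∫_a^{a+t} p_s(x,y) ds)^p μ(dy) ≤ sup_{z∈E} ∫_E (∫_0^t p_s(z,y) ds)^p μ(dy). -/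
/-!
If `μ` is s-finite this is Jensen's inequality followed by Tonelli: by Chapman–Kolmogorov,
`∫_a^{a+t} p_s(x,y) ds = ∫ p_a(x,z) (∫_0^t p_s(z,y) ds) m(dz)`, an average of the `(0, t]`-windows
against the sub-probability `p_a(x,·) m`.

For a general `μ` we may assume the right-hand side is finite, so every `∫_0^t p_s(z,·) ds` lives on
a set on which `μ` is s-finite, and it suffices to cover the support of `∫_a^{a+t} p_s(x,·) ds` by
countably many of these supports. Put `G_y = ∫_0^r p_u(·,y) du` with `r ≤ a` and `2r ≤ t`. By
Chapman–Kolmogorov and symmetry `∫ G_y G_{y'} dm ≤ r ∫_0^t p_s(y,y') ds`, so points that do not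
reach each other within time `t` have `m`-almost disjoint sets `{G_y ≠ 0}`, and these sets have
positive `m`-measure on the support in question. A maximal family of such points is therefore
countable, and by maximality the supports of `∫_0^t p_s(z,·) ds` over the family cover.
-/

open MeasureTheory ENNReal Set Filter

lemma rpow_lintegral_le_lintegral_rpow {α : Type*} [MeasurableSpace α] {ν : Measure α}
    (hν : ν univ ≤ 1) {f : α → ℝ≥0∞} (hf : AEMeasurable f ν) {p : ℝ} (hp : 1 ≤ p) :
    (∫⁻ a, f a ∂ν) ^ p ≤ ∫⁻ a, f a ^ p ∂ν := by
  have hp0 : 0 < p := one_pos.trans_le hp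
  have hHolder := eLpNorm'_le_eLpNorm'_mul_rpow_measure_univ one_pos hp hf.aestronglyMeasurable
  simp only [eLpNorm'_eq_lintegral_enorm, enorm_eq_self, rpow_one, div_one] at hHolder
  rw [← le_rpow_inv_iff hp0]
  calc ∫⁻ a, f a ∂ν ≤ (∫⁻ a, f a ^ p ∂ν) ^ (1 / p) * ν univ ^ (1 - 1 / p) := hHolder
    _ ≤ (∫⁻ a, f a ^ p ∂ν) ^ (1 / p) := by
        refine mul_le_of_le_one_right' (rpow_le_one hν ?_)
        rw [sub_nonneg, div_le_one hp0]
        exact hp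
    _ = (∫⁻ a, f a ^ p ∂ν) ^ p⁻¹ := by rw [one_div]

lemma lintegral_Ioc_comp_const_add {f : ℝ → ℝ≥0∞} (hf : Measurable f) (a b c : ℝ) :
    ∫⁻ s in Ioc b c, f (a + s) = ∫⁻ s in Ioc (a + b) (a + c), f s := by
  conv_rhs => rw [← map_add_left_eq_self volume a]
  rw [setLIntegral_map measurableSet_Ioc hf (measurable_const_add a), preimage_const_add_Ioc]
  simp only [add_sub_cancel_left]

lemma lintegral_Ioc_lintegral_Ioc_add_le {f : ℝ → ℝ≥0∞} (hf : Measurable f) (b c : ℝ) :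
    ∫⁻ σ in Ioc 0 b, ∫⁻ u in Ioc 0 c, f (σ + u)
      ≤ ENNReal.ofReal b * ∫⁻ s in Ioc 0 (b + c), f s := by
  calc ∫⁻ σ in Ioc 0 b, ∫⁻ u in Ioc 0 c, f (σ + u)
      ≤ ∫⁻ _ in Ioc 0 b, ∫⁻ s in Ioc 0 (b + c), f s := by
        refine setLIntegral_mono measurable_const fun σ hσ => ?_
        rw [lintegral_Ioc_comp_const_add hf, add_zero]
        exact lintegral_mono_set (Ioc_subset_Ioc hσ.1.le (by linarith [hσ.2]))
    _ = ENNReal.ofReal b * ∫⁻ s in Ioc 0 (b + c), f s := by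
        rw [setLIntegral_const, Real.volume_Ioc, sub_zero, mul_comm]

lemma le_lintegral_Ioc_lintegral_Ioc_add {f : ℝ → ℝ≥0∞} (hf : Measurable f) (b c : ℝ) :
    ENNReal.ofReal c * ∫⁻ s in Ioc c b, f s ≤ ∫⁻ σ in Ioc 0 b, ∫⁻ u in Ioc 0 c, f (σ + u) := by
  rw [lintegral_lintegral_swap (f := fun σ u => f (σ + u))
    (hf.comp (measurable_fst.add measurable_snd)).aemeasurable]
  calc ENNReal.ofReal c * ∫⁻ s in Ioc c b, f s = ∫⁻ _ in Ioc 0 c, ∫⁻ s in Ioc c b, f s := by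
        rw [setLIntegral_const, Real.volume_Ioc, sub_zero, mul_comm]
    _ ≤ ∫⁻ u in Ioc 0 c, ∫⁻ σ in Ioc 0 b, f (σ + u) := by
        refine setLIntegral_mono (Measurable.lintegral_prod_right'
          (hf.comp (measurable_snd.add measurable_fst))) fun u hu => ?_
        simp_rw [add_comm _ u]
        rw [lintegral_Ioc_comp_const_add hf, add_zero]
        exact lintegral_mono_set (Ioc_subset_Ioc hu.2 (by linarith [hu.1]))

lemma Measurable.comp₃ {α β γ δ ε : Type*} [MeasurableSpace α] [MeasurableSpace β]
    [MeasurableSpace γ] [MeasurableSpace δ] [MeasurableSpace ε] {P : α → β → γ → δ}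
    (hP : Measurable fun q : α × β × γ => P q.1 q.2.1 q.2.2) {f : ε → α} {g : ε → β} {h : ε → γ}
    (hf : Measurable f) (hg : Measurable g) (hh : Measurable h) :
    Measurable fun e => P (f e) (g e) (h e) :=
  hP.comp (hf.prodMk (hg.prodMk hh))

theorem exists_countable_subset_subset_biUnion_of_aedisjoint {α β : Type*} [MeasurableSpace β]
    {ν : Measure β} [SFinite ν] {R : α → α → Prop} (hR : ∀ y y', R y y' → R y' y)
    {S : α → Set β} (hS : ∀ y, NullMeasurableSet (S y) ν)
    (hdisj : ∀ y y', ¬R y y' → AEDisjoint ν (S y) (S y')) {D : Set α}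
    (hD : ∀ y ∈ D, ν (S y) ≠ 0) :
    ∃ A ⊆ D, A.Countable ∧ D ⊆ ⋃ z ∈ A, {y | R z y} := by
  obtain ⟨A, hAmax⟩ := zorn_subset {A | A ⊆ D ∧ A.Pairwise fun y y' => ¬R y y'}
    fun c hc hchain => ⟨⋃₀ c, ⟨sUnion_subset fun s hs => (hc hs).1,
      hchain.pairwise_sUnion.2 fun s hs => (hc hs).2⟩, fun s hs => subset_sUnion_of_mem hs⟩
  obtain ⟨hAD, hApw⟩ := hAmax.prop
  refine ⟨A, hAD, ?_, fun y hy => ?_⟩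
  · have hpos := Measure.countable_meas_pos_of_disjoint_iUnion₀ (ι := A) (As := fun y : A => S y)
      (fun y => hS y) fun y y' hne => hdisj y y' (hApw y.2 y'.2 (Subtype.coe_ne_coe.2 hne))
    have : Countable A := by
      rw [← Set.countable_univ_iff]
      convert hpos
      exact (eq_univ_of_forall fun y : A => pos_iff_ne_zero.2 (hD y (hAD y.2))).symm
    exact A.to_countable
  · by_contra hyA
    simp only [mem_iUnion, mem_ofPred_eq, not_exists] at hyA
    have hyA' : y ∈ A := hAmax.mem_of_prop_insert
      ⟨insert_subset hy hAD, pairwise_insert.2 ⟨hApw, fun z hz _ =>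
        ⟨fun h => hyA z hz (hR y z h), hyA z hz⟩⟩⟩
    have hyy := hdisj y y (hyA y hyA')
    rw [AEDisjoint, inter_self] at hyy
    exact hD y hy hyy

lemma sFinite_restrict_biUnion_support {α ι : Type*} [MeasurableSpace α] {μ : Measure α}
    {A : Set ι} (hA : A.Countable) {f : ι → α → ℝ≥0∞} (hf : ∀ i, Measurable (f i))
    (hfin : ∀ i ∈ A, ∫⁻ x, f i x ∂μ ≠ ∞) :
    SFinite (μ.restrict (⋃ i ∈ A, {x | f i x ≠ 0})) := by
  have (i : A) : SFinite (μ.restrict {x | f i x ≠ 0}) := by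
    have : IsFiniteMeasure ((μ.restrict {x | f i x ≠ 0}).withDensity (f i)) :=
      isFiniteMeasure_withDensity
        (ne_top_of_le_ne_top (hfin i i.2) (setLIntegral_le_lintegral _ _))
    exact sFinite_of_absolutelyContinuous (withDensity_absolutelyContinuous' (hf i).aemeasurable
      (ae_restrict_of_forall_mem (measurableSet_support (hf i)) fun x hx => hx))
  have : Countable A := hA.to_subtype
  rw [biUnion_eq_iUnion]
  exact sFinite_of_absolutelyContinuous
    (Measure.absolutelyContinuous_of_le Measure.restrict_iUnion_le)

lemma lintegral_Ioc_kernel_comm {E : Type*} {P : ℝ → E → E → ℝ≥0∞}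
    (hsymm : ∀ t > (0:ℝ), ∀ x y : E, P t x y = P t y x)
    (d : ℝ) (x y : E) : ∫⁻ s in Ioc 0 d, P s x y = ∫⁻ s in Ioc 0 d, P s y x :=
  setLIntegral_congr_fun measurableSet_Ioc fun s hs => hsymm s hs.1 x y

section HeatKernel

variable {E : Type*} [MeasurableSpace E]

def ChapmanKolmogorov (m : Measure E) (P : ℝ → E → E → ℝ≥0∞) : Prop :=
  ∀ s > (0:ℝ), ∀ t > (0:ℝ), ∀ x y : E, P (t + s) x y = ∫⁻ z, P t x z * P s z y ∂m

variable {m : Measure E} {P : ℝ → E → E → ℝ≥0∞}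

lemma measurable_lintegral_Ioc_kernel (hP : Measurable fun q : ℝ × E × E => P q.1 q.2.1 q.2.2)
    (c d : ℝ) {α : Type*} [MeasurableSpace α] {f g : α → E} (hf : Measurable f)
    (hg : Measurable g) : Measurable fun e => ∫⁻ s in Ioc c d, P s (f e) (g e) :=
  (Measurable.lintegral_prod_right' (f := fun q : α × ℝ => P q.2 (f q.1) (g q.1))
    (hP.comp₃ measurable_snd (hf.comp measurable_fst) (hg.comp measurable_fst)))

variable [SigmaFinite m]

lemma lintegral_kernel_mul_lintegral_Ioc (hP : Measurable fun q : ℝ × E × E => P q.1 q.2.1 q.2.2)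
    (hck : ChapmanKolmogorov m P) {σ : ℝ} (hσ : 0 < σ) (c : ℝ) (x y : E) :
    ∫⁻ v, P σ x v * (∫⁻ u in Ioc 0 c, P u v y) ∂m = ∫⁻ u in Ioc 0 c, P (σ + u) x y := by
  calc ∫⁻ v, P σ x v * (∫⁻ u in Ioc 0 c, P u v y) ∂m
      = ∫⁻ v, (∫⁻ u in Ioc 0 c, P σ x v * P u v y) ∂m := lintegral_congr fun v =>
        (lintegral_const_mul _ (hP.comp₃ measurable_id' measurable_const measurable_const)).symm
    _ = ∫⁻ u in Ioc 0 c, ∫⁻ v, P σ x v * P u v y ∂m := lintegral_lintegral_swap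
        ((hP.comp₃ measurable_const measurable_const measurable_fst).mul
          (hP.comp₃ measurable_snd measurable_fst measurable_const)).aemeasurable
    _ = ∫⁻ u in Ioc 0 c, P (σ + u) x y :=
        setLIntegral_congr_fun measurableSet_Ioc fun u hu => (hck u hu.1 σ hσ x y).symm

lemma lintegral_Ioc_kernel_eq_lintegral_mul
    (hP : Measurable fun q : ℝ × E × E => P q.1 q.2.1 q.2.2) (hck : ChapmanKolmogorov m P)
    {a : ℝ} (ha : 0 < a) (t : ℝ) (x y : E) :
    ∫⁻ s in Ioc a (a + t), P s x y = ∫⁻ z, P a x z * (∫⁻ s in Ioc 0 t, P s z y) ∂m := by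
  rw [lintegral_kernel_mul_lintegral_Ioc hP hck ha,
    lintegral_Ioc_comp_const_add (hP.comp₃ measurable_id' measurable_const measurable_const),
    add_zero]

lemma lintegral_lintegral_Ioc_kernel_mul
    (hP : Measurable fun q : ℝ × E × E => P q.1 q.2.1 q.2.2) (hck : ChapmanKolmogorov m P)
    (b c : ℝ) (x y : E) :
    ∫⁻ v, (∫⁻ σ in Ioc 0 b, P σ x v) * (∫⁻ u in Ioc 0 c, P u v y) ∂m
      = ∫⁻ σ in Ioc 0 b, ∫⁻ u in Ioc 0 c, P (σ + u) x y := by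
  have hG : Measurable fun v => ∫⁻ u in Ioc 0 c, P u v y :=
    measurable_lintegral_Ioc_kernel hP 0 c measurable_id measurable_const
  calc ∫⁻ v, (∫⁻ σ in Ioc 0 b, P σ x v) * (∫⁻ u in Ioc 0 c, P u v y) ∂m
      = ∫⁻ v, (∫⁻ σ in Ioc 0 b, P σ x v * ∫⁻ u in Ioc 0 c, P u v y) ∂m := lintegral_congr fun v =>
        (lintegral_mul_const _ (hP.comp₃ measurable_id' measurable_const measurable_const)).symm
    _ = ∫⁻ σ in Ioc 0 b, ∫⁻ v, P σ x v * (∫⁻ u in Ioc 0 c, P u v y) ∂m := lintegral_lintegral_swap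
        ((hP.comp₃ measurable_snd measurable_const measurable_fst).mul
          (hG.comp measurable_fst)).aemeasurable
    _ = ∫⁻ σ in Ioc 0 b, ∫⁻ u in Ioc 0 c, P (σ + u) x y :=
        setLIntegral_congr_fun measurableSet_Ioc fun σ hσ =>
          lintegral_kernel_mul_lintegral_Ioc hP hck hσ.1 c x y

lemma measure_ne_zero_of_lintegral_Ioc_kernel_ne_zero
    (hP : Measurable fun q : ℝ × E × E => P q.1 q.2.1 q.2.2) (hck : ChapmanKolmogorov m P)
    {r a b : ℝ} (hr : 0 < r) (hra : r ≤ a) {x y : E} (hxy : ∫⁻ s in Ioc a b, P s x y ≠ 0) :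
    m {v | ∫⁻ u in Ioc 0 r, P u v y ≠ 0} ≠ 0 := by
  intro hm0
  have hzero : ∫⁻ v, (∫⁻ σ in Ioc 0 b, P σ x v) * (∫⁻ u in Ioc 0 r, P u v y) ∂m = 0 := by
    have hae : ∀ᵐ v ∂m, (∫⁻ σ in Ioc 0 b, P σ x v) * ∫⁻ u in Ioc 0 r, P u v y = 0 :=
      measure_mono_null (fun v hv => right_ne_zero_of_mul hv) hm0
    rw [lintegral_congr_ae hae, lintegral_zero]
  have hle := le_lintegral_Ioc_lintegral_Ioc_add
    (hP.comp₃ measurable_id' measurable_const measurable_const : Measurable fun s => P s x y) b r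
  rw [← lintegral_lintegral_Ioc_kernel_mul hP hck, hzero, nonpos_iff_eq_zero, mul_eq_zero,
    ENNReal.ofReal_eq_zero, or_iff_right hr.not_ge] at hle
  exact hxy (le_antisymm (hle ▸ lintegral_mono_set (Ioc_subset_Ioc_left hra)) bot_le)

lemma aedisjoint_of_lintegral_Ioc_kernel_eq_zero
    (hP : Measurable fun q : ℝ × E × E => P q.1 q.2.1 q.2.2)
    (hsymm : ∀ t > (0:ℝ), ∀ x y : E, P t x y = P t y x) (hck : ChapmanKolmogorov m P)
    {r t : ℝ} (hrt : r + r ≤ t) {y y' : E} (hyy' : ∫⁻ s in Ioc 0 t, P s y y' = 0) :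
    AEDisjoint m {v | ∫⁻ u in Ioc 0 r, P u v y ≠ 0} {v | ∫⁻ u in Ioc 0 r, P u v y' ≠ 0} := by
  have hzero : ∫⁻ v, (∫⁻ u in Ioc 0 r, P u v y) * (∫⁻ u in Ioc 0 r, P u v y') ∂m = 0 := by
    refine le_antisymm ?_ bot_le
    calc ∫⁻ v, (∫⁻ u in Ioc 0 r, P u v y) * (∫⁻ u in Ioc 0 r, P u v y') ∂m
        = ∫⁻ σ in Ioc 0 r, ∫⁻ u in Ioc 0 r, P (σ + u) y y' := by
          simp_rw [lintegral_Ioc_kernel_comm hsymm r _ y]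
          exact lintegral_lintegral_Ioc_kernel_mul hP hck r r y y'
      _ ≤ ENNReal.ofReal r * ∫⁻ s in Ioc 0 (r + r), P s y y' :=
          lintegral_Ioc_lintegral_Ioc_add_le
            (hP.comp₃ measurable_id' measurable_const measurable_const) r r
      _ ≤ ENNReal.ofReal r * ∫⁻ s in Ioc 0 t, P s y y' := by
          gcongr
      _ = 0 := by rw [hyy', mul_zero]
  have hmeas : Measurable fun v => (∫⁻ u in Ioc 0 r, P u v y) * ∫⁻ u in Ioc 0 r, P u v y' :=
    (measurable_lintegral_Ioc_kernel hP 0 r measurable_id' measurable_const).mul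
      (measurable_lintegral_Ioc_kernel hP 0 r measurable_id' measurable_const)
  rw [lintegral_eq_zero_iff hmeas] at hzero
  exact measure_mono_null (fun v hv => mul_ne_zero hv.1 hv.2) hzero

lemma lintegral_rpow_lintegral_Ioc_kernel_le_iSup
    (hP : Measurable fun q : ℝ × E × E => P q.1 q.2.1 q.2.2) (hck : ChapmanKolmogorov m P)
    (hsub : ∀ t > (0:ℝ), ∀ x : E, ∫⁻ y, P t x y ∂m ≤ 1) (ν : Measure E) [SFinite ν]
    {p : ℝ} (hp : 1 ≤ p) {a : ℝ} (ha : 0 < a) (t : ℝ) (x : E) :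
    ∫⁻ y, (∫⁻ s in Ioc a (a + t), P s x y) ^ p ∂ν
      ≤ ⨆ z : E, ∫⁻ y, (∫⁻ s in Ioc (0:ℝ) t, P s z y) ^ p ∂ν := by
  have hw : Measurable (P a x) := hP.comp₃ measurable_const measurable_const measurable_id'
  have hF : Measurable fun q : E × E => ∫⁻ s in Ioc 0 t, P s q.1 q.2 :=
    measurable_lintegral_Ioc_kernel hP 0 t measurable_fst measurable_snd
  have hFy (y : E) : Measurable fun z => ∫⁻ s in Ioc 0 t, P s z y :=
    measurable_lintegral_Ioc_kernel hP 0 t measurable_id' measurable_const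
  set ρ := m.withDensity (P a x)
  have hρ : ρ univ ≤ 1 := by
    rw [withDensity_apply _ MeasurableSet.univ, Measure.restrict_univ]
    exact hsub a ha x
  calc ∫⁻ y, (∫⁻ s in Ioc a (a + t), P s x y) ^ p ∂ν
      = ∫⁻ y, (∫⁻ z, (∫⁻ s in Ioc 0 t, P s z y) ∂ρ) ^ p ∂ν := by
        refine lintegral_congr fun y => ?_
        rw [lintegral_Ioc_kernel_eq_lintegral_mul hP hck ha]
        exact congrArg (· ^ p) (lintegral_withDensity_eq_lintegral_mul m hw (hFy y)).symm
    _ ≤ ∫⁻ y, ∫⁻ z, (∫⁻ s in Ioc 0 t, P s z y) ^ p ∂ρ ∂ν := lintegral_mono fun y =>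
        rpow_lintegral_le_lintegral_rpow hρ (hFy y).aemeasurable hp
    _ = ∫⁻ z, ∫⁻ y, (∫⁻ s in Ioc 0 t, P s z y) ^ p ∂ν ∂ρ :=
        lintegral_lintegral_swap ((hF.comp measurable_swap).pow_const p).aemeasurable
    _ ≤ ∫⁻ _, ⨆ z : E, ∫⁻ y, (∫⁻ s in Ioc (0:ℝ) t, P s z y) ^ p ∂ν ∂ρ :=
        lintegral_mono fun z => le_iSup (fun z => ∫⁻ y, (∫⁻ s in Ioc (0:ℝ) t, P s z y) ^ p ∂ν) z
    _ ≤ ⨆ z : E, ∫⁻ y, (∫⁻ s in Ioc (0:ℝ) t, P s z y) ^ p ∂ν := by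
        rw [lintegral_const]
        exact mul_le_of_le_one_right' hρ

lemma exists_countable_support_subset_biUnion_support
    (hP : Measurable fun q : ℝ × E × E => P q.1 q.2.1 q.2.2)
    (hsymm : ∀ t > (0:ℝ), ∀ x y : E, P t x y = P t y x) (hck : ChapmanKolmogorov m P)
    {a t : ℝ} (ha : 0 < a) (ht : 0 < t) (x : E) :
    ∃ A : Set E, A.Countable ∧ {y | ∫⁻ s in Ioc a (a + t), P s x y ≠ 0}
      ⊆ ⋃ z ∈ A, {y | ∫⁻ s in Ioc 0 t, P s z y ≠ 0} := by
  have hr : 0 < min a (t / 2) := lt_min ha (half_pos ht)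
  obtain ⟨A, -, hA, hcover⟩ := exists_countable_subset_subset_biUnion_of_aedisjoint (ν := m)
    (R := fun z y => ∫⁻ s in Ioc 0 t, P s z y ≠ 0)
    (fun y y' => by rw [lintegral_Ioc_kernel_comm hsymm]; exact id)
    (S := fun y => {v | ∫⁻ u in Ioc 0 (min a (t / 2)), P u v y ≠ 0})
    (fun y => (measurableSet_support (measurable_lintegral_Ioc_kernel hP 0 _ measurable_id'
      measurable_const)).nullMeasurableSet)
    (fun y y' h => aedisjoint_of_lintegral_Ioc_kernel_eq_zero hP hsymm hck
      (by linarith [min_le_right a (t / 2)]) (not_not.1 h))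
    (fun y hy => measure_ne_zero_of_lintegral_Ioc_kernel_ne_zero hP hck hr (min_le_left _ _) hy)
  exact ⟨A, hA, hcover⟩

end HeatKernel

theorem stmt_1 {E : Type*} [MeasurableSpace E] (m μ : Measure E) [SigmaFinite m]
    (P : ℝ → E → E → ℝ≥0∞)
    (hmeas : Measurable (fun q : ℝ × E × E => P q.1 q.2.1 q.2.2))
    (hsymm : ∀ t > (0:ℝ), ∀ x y : E, P t x y = P t y x)
    (hck : ∀ s > (0:ℝ), ∀ t > (0:ℝ), ∀ x y : E,
      P (t + s) x y = ∫⁻ z, P t x z * P s z y ∂m)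
    (hsub : ∀ t > (0:ℝ), ∀ x : E, ∫⁻ y, P t x y ∂m ≤ 1)
    (p : ℝ) (hp : 1 ≤ p) (a t : ℝ) (ha : 0 < a) (ht : 0 < t) (x : E) :
    ∫⁻ y, (∫⁻ s in Set.Ioc a (a + t), P s x y) ^ p ∂μ
      ≤ ⨆ z : E, ∫⁻ y, (∫⁻ s in Set.Ioc (0:ℝ) t, P s z y) ^ p ∂μ := by
  rcases eq_or_ne (⨆ z : E, ∫⁻ y, (∫⁻ s in Ioc (0:ℝ) t, P s z y) ^ p ∂μ) ∞ with hS | hS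
  · exact hS ▸ le_top
  have hp0 : 0 < p := one_pos.trans_le hp
  obtain ⟨A, hA, hcover⟩ :=
    exists_countable_support_subset_biUnion_support hmeas hsymm hck ha ht x
  set T := ⋃ z ∈ A, {y | (∫⁻ s in Ioc 0 t, P s z y) ^ p ≠ 0}
  have : SFinite (μ.restrict T) := sFinite_restrict_biUnion_support hA
    (fun z => (measurable_lintegral_Ioc_kernel hmeas 0 t measurable_const
      measurable_id').pow_const p)
    fun z _ => ne_top_of_le_ne_top hS
      (le_iSup (fun z => ∫⁻ y, (∫⁻ s in Ioc (0:ℝ) t, P s z y) ^ p ∂μ) z)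
  have hsupp : (fun y => (∫⁻ s in Ioc a (a + t), P s x y) ^ p).support ⊆ T := by
    intro y hy
    have hy' : ∫⁻ s in Ioc a (a + t), P s x y ≠ 0 := fun h0 => hy (by simp [h0, hp0])
    obtain ⟨z, hz, hzy⟩ := mem_iUnion₂.1 (hcover hy')
    exact mem_iUnion₂.2 ⟨z, hz, by simpa [hp0, hp0.le] using hzy⟩
  calc ∫⁻ y, (∫⁻ s in Ioc a (a + t), P s x y) ^ p ∂μ
      = ∫⁻ y in T, (∫⁻ s in Ioc a (a + t), P s x y) ^ p ∂μ :=
        (setLIntegral_eq_of_support_subset hsupp).symm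
    _ ≤ ⨆ z : E, ∫⁻ y in T, (∫⁻ s in Ioc (0:ℝ) t, P s z y) ^ p ∂μ :=
        lintegral_rpow_lintegral_Ioc_kernel_le_iSup hmeas hck hsub _ hp ha t x
    _ ≤ ⨆ z : E, ∫⁻ y, (∫⁻ s in Ioc (0:ℝ) t, P s z y) ^ p ∂μ :=
        iSup_mono fun z => setLIntegral_le_lintegral _ _
end

section
/- Let (E,ρ) be a metric space with a Borel measure m such that diam(E) ≤ 1, m(E) < ∞, and there exist constants c₁, c₂ > 0 and d_f ≥ 1 with c₁ r^{d_f} ≤ m(B(x,r)) ≤ c₂ r^{d_f} for all x ∈ E and r ∈ (0,1], where B(x,r) is the open ball of center x and radius r. Let p_t(x,y) be a symmetric sub-Markovian heat kernel on (E,m) and suppose there exist constants c₃ > 0 and d_w ≥ 2 such that p_t(x,y) ≤ c₃ min{ t^{−d_f/d_w}, t/ρ(x,y)^{d_f + d_w} } for all x,y ∈ E and t ∈ (0,1] (jump-type upper estimate). If p ∈ [1,∞) and δ ∈ (0,1] satisfy p·d_w·δ < d_f − p(d_f − d_w), then m belongs to the L^p-Kato class with order δ, i.e. there exist C, α₀ >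 0 such that sup_{x∈E} (∫_E r_α(x,y)^p m(dy))^{1/p} ≤ C α^{−δ} for all α ≥ α₀. -/
open MeasureTheory ENNReal Set Filter

/-!
For `t ≤ 1` the upper estimate gives `p_t(x, y) ≤ c₃ t^(-d_f/d_w)`, and Chapman–Kolmogorov
together with the sub-Markov property propagates the bound at `t = 1` to all `t ≥ 1`.
Interpolating with `∫ p_t(x, y) m(dy) ≤ 1` gives
`∫ p_t(x, y)^p m(dy) ≤ c₃^(p-1) (t^(-β) + 1)` with `β = (p - 1) d_f / d_w`.
Hölder's inequality in `t`, against the weights `t^a` and `t^(-a)`, bounds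
`∫ r_α(x, y)^p m(dy)` by Gamma integrals of total order `α^(β - p)`, and the condition on `p`
and `δ` says exactly that `β - p < -δ p`.
-/

section

open Real

theorem lintegral_Ioi_exp_neg_mul_mul_rpow {α c : ℝ} (hα : 0 < α) (hc : -1 < c) :
    ∫⁻ t in Ioi 0, ENNReal.ofReal (exp (-(α * t))) * ENNReal.ofReal t ^ c
      = ENNReal.ofReal (Gamma (c + 1)) * ENNReal.ofReal α ^ (-(c + 1)) := by
  have hint : IntegrableOn (fun t : ℝ => t ^ c * exp (-α * t)) (Ioi 0) := by
    simpa using integrableOn_rpow_mul_exp_neg_mul_rpow hc one_pos hα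
  have hval : ∫ t in Ioi 0, t ^ c * exp (-α * t) = α ^ (-(c + 1)) * Gamma (c + 1) := by
    simpa using integral_rpow_mul_exp_neg_mul_rpow one_pos hc hα
  rw [ENNReal.ofReal_rpow_of_pos hα, ← ENNReal.ofReal_mul (Gamma_pos_of_pos (by linarith)).le,
    mul_comm, ← hval, ofReal_integral_eq_lintegral_ofReal hint
      (ae_restrict_of_forall_mem measurableSet_Ioi fun t (ht : 0 < t) => by positivity)]
  refine setLIntegral_congr_fun measurableSet_Ioi fun t ht => ?_
  rw [ENNReal.ofReal_rpow_of_pos ht, ← ENNReal.ofReal_mul (exp_nonneg _), mul_comm, neg_mul]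

theorem rpow_lintegral_Ioi_exp_neg_mul_le {p q a α : ℝ} (hpq : p.HolderConjugate q)
    (ha : a * q < 1) (hα : 0 < α) {f : ℝ → ℝ≥0∞} (hf : Measurable f) :
    (∫⁻ t in Ioi 0, ENNReal.ofReal (exp (-(α * t))) * f t) ^ p ≤
      (ENNReal.ofReal (Gamma (1 - a * q)) * ENNReal.ofReal α ^ (a * q - 1)) ^ (p / q) *
        ∫⁻ t in Ioi 0,
          ENNReal.ofReal (exp (-(α * t))) * ENNReal.ofReal t ^ (a * p) * f t ^ p := by
  set F : ℝ → ℝ≥0∞ := fun t =>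
    ENNReal.ofReal (exp (-(α * t) / p)) * ENNReal.ofReal t ^ a * f t
  set G : ℝ → ℝ≥0∞ := fun t =>
    ENNReal.ofReal (exp (-(α * t) / q)) * ENNReal.ofReal t ^ (-a)
  have hp0 := hpq.pos
  have hq0 := hpq.symm.pos
  have hFG : ∫⁻ t in Ioi 0, ENNReal.ofReal (exp (-(α * t))) * f t
      = ∫⁻ t in Ioi 0, (F * G) t := by
    refine setLIntegral_congr_fun measurableSet_Ioi fun t (ht : 0 < t) => ?_
    have hsplit : -(α * t) = -(α * t) / p + -(α * t) / q := by
      linear_combination (α * t) * hpq.inv_add_inv_eq_one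
    have hpow : ENNReal.ofReal t ^ a * ENNReal.ofReal t ^ (-a) = 1 := by
      rw [← ENNReal.rpow_add _ _ (ENNReal.ofReal_pos.2 ht).ne' ENNReal.ofReal_ne_top,
        add_neg_cancel, ENNReal.rpow_zero]
    calc ENNReal.ofReal (exp (-(α * t))) * f t
        = ENNReal.ofReal (exp (-(α * t) / p) * exp (-(α * t) / q)) *
            (ENNReal.ofReal t ^ a * ENNReal.ofReal t ^ (-a)) * f t := by
          rw [hpow, mul_one, ← exp_add, ← hsplit]
      _ = (F * G) t := by
          rw [ENNReal.ofReal_mul (exp_nonneg _)]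
          simp only [F, G, Pi.mul_apply]
          ring
  have hF : ∫⁻ t in Ioi 0, F t ^ p
      = ∫⁻ t in Ioi 0,
          ENNReal.ofReal (exp (-(α * t))) * ENNReal.ofReal t ^ (a * p) * f t ^ p := by
    refine setLIntegral_congr_fun measurableSet_Ioi fun t (ht : 0 < t) => ?_
    simp only [F, ENNReal.mul_rpow_of_nonneg _ _ hp0.le, ENNReal.ofReal_rpow_of_pos (exp_pos _),
      ← exp_mul, div_mul_cancel₀ _ hp0.ne', ← ENNReal.rpow_mul]
  have hG : ∫⁻ t in Ioi 0, G t ^ q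
      = ENNReal.ofReal (Gamma (1 - a * q)) * ENNReal.ofReal α ^ (a * q - 1) := by
    rw [show 1 - a * q = -(a * q) + 1 by ring, show a * q - 1 = -(-(a * q) + 1) by ring,
      ← lintegral_Ioi_exp_neg_mul_mul_rpow hα (by linarith)]
    refine setLIntegral_congr_fun measurableSet_Ioi fun t (ht : 0 < t) => ?_
    simp only [G, ENNReal.mul_rpow_of_nonneg _ _ hq0.le, ENNReal.ofReal_rpow_of_pos (exp_pos _),
      ← exp_mul, div_mul_cancel₀ _ hq0.ne', ← ENNReal.rpow_mul, neg_mul]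
  have hmF : AEMeasurable F (volume.restrict (Ioi 0)) := by unfold F; fun_prop
  have hmG : AEMeasurable G (volume.restrict (Ioi 0)) := by unfold G; fun_prop
  calc (∫⁻ t in Ioi 0, ENNReal.ofReal (exp (-(α * t))) * f t) ^ p
      ≤ ((∫⁻ t in Ioi 0, F t ^ p) ^ (1 / p) *
          (∫⁻ t in Ioi 0, G t ^ q) ^ (1 / q)) ^ p := by
        rw [hFG]
        gcongr
        exact ENNReal.lintegral_mul_le_Lp_mul_Lq _ hpq hmF hmG
    _ = (∫⁻ t in Ioi 0, G t ^ q) ^ (p / q) * ∫⁻ t in Ioi 0, F t ^ p := by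
        rw [ENNReal.mul_rpow_of_nonneg _ _ hp0.le, ← ENNReal.rpow_mul, ← ENNReal.rpow_mul,
          one_div_mul_cancel hp0.ne', ENNReal.rpow_one, mul_comm, one_div_mul_eq_div]
    _ = _ := by rw [hF, hG]

theorem lintegral_Ioi_exp_neg_mul_mul_rpow_mul_le {α b β K : ℝ} (hα : 1 ≤ α)
    (hβ : 0 ≤ β) (hb : β - 1 < b) {g : ℝ → ℝ≥0∞}
    (hg : ∀ t > 0, g t ≤ ENNReal.ofReal K * (ENNReal.ofReal t ^ (-β) + 1)) :
    ∫⁻ t in Ioi 0, ENNReal.ofReal (exp (-(α * t))) * ENNReal.ofReal t ^ b * g t ≤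
      ENNReal.ofReal K * ENNReal.ofReal (Gamma (b - β + 1) + Gamma (b + 1)) *
        ENNReal.ofReal α ^ (β - b - 1) := by
  have hα0 : 0 < α := by linarith
  set e : ℝ → ℝ≥0∞ := fun t => ENNReal.ofReal (exp (-(α * t)))
  calc ∫⁻ t in Ioi 0, e t * ENNReal.ofReal t ^ b * g t
      ≤ ∫⁻ t in Ioi 0, ENNReal.ofReal K *
          (e t * ENNReal.ofReal t ^ (b - β) + e t * ENNReal.ofReal t ^ b) := by
        refine setLIntegral_mono' measurableSet_Ioi fun t (ht : 0 < t) => ?_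
        rw [sub_eq_add_neg, ENNReal.rpow_add _ _ (ENNReal.ofReal_pos.2 ht).ne' ofReal_ne_top]
        calc e t * ENNReal.ofReal t ^ b * g t
            ≤ e t * ENNReal.ofReal t ^ b *
                (ENNReal.ofReal K * (ENNReal.ofReal t ^ (-β) + 1)) := by
              gcongr
              exact hg t ht
          _ = _ := by ring
    _ = ENNReal.ofReal K *
          (ENNReal.ofReal (Gamma (b - β + 1)) * ENNReal.ofReal α ^ (-(b - β + 1)) +
          ENNReal.ofReal (Gamma (b + 1)) * ENNReal.ofReal α ^ (-(b + 1))) := by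
        rw [lintegral_const_mul' _ _ ofReal_ne_top, lintegral_add_left (by fun_prop),
          lintegral_Ioi_exp_neg_mul_mul_rpow hα0 (by linarith),
          lintegral_Ioi_exp_neg_mul_mul_rpow hα0 (by linarith)]
    _ ≤ ENNReal.ofReal K *
          (ENNReal.ofReal (Gamma (b - β + 1)) * ENNReal.ofReal α ^ (β - b - 1) +
          ENNReal.ofReal (Gamma (b + 1)) * ENNReal.ofReal α ^ (β - b - 1)) := by
        have hα1 : 1 ≤ ENNReal.ofReal α := by simpa using ENNReal.ofReal_le_ofReal hα
        gcongr <;> linarith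
    _ = _ := by
        rw [ENNReal.ofReal_add (Gamma_pos_of_pos (by linarith)).le
          (Gamma_pos_of_pos (by linarith)).le]
        ring

theorem lintegral_rpow_le_rpow_mul_lintegral {X : Type*} [MeasurableSpace X] {μ : Measure X}
    {f : X → ℝ≥0∞} {M : ℝ≥0∞} {p : ℝ} (hp : 1 ≤ p) (hM : M ≠ ⊤)
    (hf : ∀ x, f x ≤ M) :
    ∫⁻ x, f x ^ p ∂μ ≤ M ^ (p - 1) * ∫⁻ x, f x ∂μ := by
  have hsplit : ∀ x, f x ^ p = f x ^ (p - 1) * f x := fun x => by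
    conv_lhs => rw [← sub_add_cancel p 1]
    rw [ENNReal.rpow_add_of_nonneg _ _ (by linarith) zero_le_one, ENNReal.rpow_one]
  calc ∫⁻ x, f x ^ p ∂μ ≤ ∫⁻ x, M ^ (p - 1) * f x ∂μ := by
        refine lintegral_mono fun x => ?_
        rw [hsplit]
        gcongr
        exact hf x
    _ = M ^ (p - 1) * ∫⁻ x, f x ∂μ :=
        lintegral_const_mul' _ _ (ENNReal.rpow_ne_top_of_nonneg (by linarith) hM)

section HeatKernel

variable {E : Type*} [MeasurableSpace E] {m : Measure E} {P : ℝ → E → E → ℝ≥0∞}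

theorem heatKernel_le_of_forall_le_of_le
    (hsymm : ∀ t > (0:ℝ), ∀ x y : E, P t x y = P t y x)
    (hck : ∀ s > (0:ℝ), ∀ t > (0:ℝ), ∀ x y : E,
      P (t + s) x y = ∫⁻ z, P t x z * P s z y ∂m)
    (hsub : ∀ t > (0:ℝ), ∀ x : E, ∫⁻ y, P t x y ∂m ≤ 1)
    {s t : ℝ} {M : ℝ≥0∞} (hs : 0 < s) (hst : s ≤ t) (hM : ∀ x y, P s x y ≤ M)
    (x y : E) :
    P t x y ≤ M := by
  rcases hst.eq_or_lt with rfl | hst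
  · exact hM x y
  obtain rfl | hMtop := eq_or_ne M ⊤
  · exact le_top
  have hts : 0 < t - s := sub_pos.2 hst
  calc P t x y = ∫⁻ z, P s x z * P (t - s) z y ∂m := by
        rw [← hck _ hts _ hs, add_sub_cancel]
    _ ≤ ∫⁻ z, M * P (t - s) y z ∂m := by
        refine lintegral_mono fun z => ?_
        rw [hsymm _ hts z y]
        gcongr
        exact hM x z
    _ ≤ M * 1 := by
        rw [lintegral_const_mul' _ _ hMtop]
        gcongr
        exact hsub _ hts y
    _ = M := mul_one M

theorem lintegral_heatKernel_rpow_le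
    (hsymm : ∀ t > (0:ℝ), ∀ x y : E, P t x y = P t y x)
    (hck : ∀ s > (0:ℝ), ∀ t > (0:ℝ), ∀ x y : E,
      P (t + s) x y = ∫⁻ z, P t x z * P s z y ∂m)
    (hsub : ∀ t > (0:ℝ), ∀ x : E, ∫⁻ y, P t x y ∂m ≤ 1)
    {c ν p : ℝ} (hc : 0 ≤ c) (hp : 1 ≤ p)
    (hdiag : ∀ x y : E, ∀ t : ℝ, 0 < t → t ≤ 1 →
      P t x y ≤ ENNReal.ofReal c * ENNReal.ofReal t ^ (-ν))
    (x : E) {t : ℝ} (ht : 0 < t) :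
    ∫⁻ y, P t x y ^ p ∂m ≤
      ENNReal.ofReal (c ^ (p - 1)) * (ENNReal.ofReal t ^ (-((p - 1) * ν)) + 1) := by
  set M := ENNReal.ofReal c * ENNReal.ofReal (min t 1) ^ (-ν)
  have hM : M ≠ ⊤ := mul_ne_top ofReal_ne_top
    (rpow_ne_top_of_ne_zero (ENNReal.ofReal_pos.2 (lt_min ht one_pos)).ne' ofReal_ne_top)
  have hPM : ∀ y, P t x y ≤ M := by
    rcases le_or_gt t 1 with ht1 | ht1
    · simpa only [M, min_eq_left ht1] using (hdiag x · t ht ht1)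
    · simpa only [M, min_eq_right ht1.le] using heatKernel_le_of_forall_le_of_le hsymm hck hsub
        one_pos ht1.le (fun x y => hdiag x y 1 one_pos le_rfl) x
  calc ∫⁻ y, P t x y ^ p ∂m ≤ M ^ (p - 1) * ∫⁻ y, P t x y ∂m :=
        lintegral_rpow_le_rpow_mul_lintegral hp hM hPM
    _ ≤ M ^ (p - 1) * 1 := by gcongr; exact hsub t ht x
    _ = ENNReal.ofReal (c ^ (p - 1)) * ENNReal.ofReal (min t 1) ^ (-((p - 1) * ν)) := by
        rw [mul_one, ENNReal.mul_rpow_of_nonneg _ _ (by linarith), ← ENNReal.rpow_mul,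
          ENNReal.ofReal_rpow_of_nonneg hc (by linarith),
          show -ν * (p - 1) = -((p - 1) * ν) by ring]
    _ ≤ _ := by
        gcongr
        rcases le_or_gt t 1 with ht1 | ht1
        · rw [min_eq_left ht1]
          exact le_self_add
        · rw [min_eq_right ht1.le, ENNReal.ofReal_one, ENNReal.one_rpow]
          exact le_add_self

theorem lintegral_lintegral_heatKernel_rpow_swap [SFinite m]
    (hmeas : Measurable (fun q : ℝ × E × E => P q.1 q.2.1 q.2.2)) {w : ℝ → ℝ≥0∞}
    (hw : Measurable w) (p : ℝ) (x : E) :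
    ∫⁻ y, (∫⁻ t in Ioi 0, w t * P t x y ^ p) ∂m =
      ∫⁻ t in Ioi 0, w t * ∫⁻ y, P t x y ^ p ∂m := by
  have hP : Measurable fun z : E × ℝ => P z.2 x z.1 :=
    hmeas.comp (by fun_prop : Measurable fun z : E × ℝ => (z.2, x, z.1))
  rw [lintegral_lintegral_swap ((hw.comp measurable_snd).mul (hP.pow_const p)).aemeasurable]
  refine lintegral_congr fun t => lintegral_const_mul _ ?_
  exact (hmeas.comp (by fun_prop : Measurable fun y : E => (t, x, y))).pow_const p

theorem exists_lintegral_heatResolvent_le [SFinite m]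
    (hmeas : Measurable (fun q : ℝ × E × E => P q.1 q.2.1 q.2.2)) {K β : ℝ} (hK : 0 < K)
    (hβ : 0 ≤ β) (hβ1 : β < 1)
    (hL1 : ∀ x : E, ∀ t : ℝ, 0 < t →
      ∫⁻ y, P t x y ∂m ≤ ENNReal.ofReal K * (ENNReal.ofReal t ^ (-β) + 1)) :
    ∃ C > (0:ℝ), ∀ α ≥ (1:ℝ), ∀ x : E,
      ∫⁻ y, heatResolvent P α x y ∂m ≤ ENNReal.ofReal (C * α ^ (β - 1)) := by
  have hC : 0 < K * (Gamma (0 - β + 1) + Gamma (0 + 1)) :=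
    mul_pos hK (add_pos (Gamma_pos_of_pos (by linarith)) (by simp))
  refine ⟨_, hC, fun α hα x => ?_⟩
  calc ∫⁻ y, heatResolvent P α x y ∂m
      = ∫⁻ t in Ioi 0, ENNReal.ofReal (exp (-(α * t))) * ENNReal.ofReal t ^ (0:ℝ) *
          ∫⁻ y, P t x y ∂m := by
        simpa only [heatResolvent, ENNReal.rpow_one, ENNReal.rpow_zero, mul_one] using
          lintegral_lintegral_heatKernel_rpow_swap hmeas
            (w := fun t => ENNReal.ofReal (exp (-(α * t)))) (by fun_prop) 1 x
    _ ≤ _ := lintegral_Ioi_exp_neg_mul_mul_rpow_mul_le hα hβ (by linarith) (hL1 x)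
    _ = _ := by
      rw [ENNReal.ofReal_rpow_of_pos (by linarith), ← ENNReal.ofReal_mul hK.le,
        ← ENNReal.ofReal_mul hC.le, sub_zero]

theorem lintegral_heatResolvent_rpow_le_of_holderConjugate [SFinite m]
    (hmeas : Measurable (fun q : ℝ × E × E => P q.1 q.2.1 q.2.2)) {K β p q a α : ℝ}
    (hpq : p.HolderConjugate q) (haq : a * q < 1) (hap : β - 1 < a * p) (hβ : 0 ≤ β)
    (hLp : ∀ x : E, ∀ t : ℝ, 0 < t →
      ∫⁻ y, P t x y ^ p ∂m ≤ ENNReal.ofReal K * (ENNReal.ofReal t ^ (-β) + 1))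
    (hα : 1 ≤ α) (x : E) :
    ∫⁻ y, heatResolvent P α x y ^ p ∂m ≤
      (ENNReal.ofReal (Gamma (1 - a * q)) * ENNReal.ofReal α ^ (a * q - 1)) ^ (p / q) *
        (ENNReal.ofReal K * ENNReal.ofReal (Gamma (a * p - β + 1) + Gamma (a * p + 1)) *
          ENNReal.ofReal α ^ (β - a * p - 1)) := by
  set H := (ENNReal.ofReal (Gamma (1 - a * q)) * ENNReal.ofReal α ^ (a * q - 1)) ^ (p / q)
  have hH : H ≠ ⊤ := rpow_ne_top_of_nonneg (div_pos hpq.pos hpq.symm.pos).le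
    (mul_ne_top ofReal_ne_top (rpow_ne_top_of_ne_zero
      (ENNReal.ofReal_pos.2 (by linarith)).ne' ofReal_ne_top))
  set w : ℝ → ℝ≥0∞ := fun t =>
    ENNReal.ofReal (exp (-(α * t))) * ENNReal.ofReal t ^ (a * p)
  calc ∫⁻ y, heatResolvent P α x y ^ p ∂m
      ≤ ∫⁻ y, H * (∫⁻ t in Ioi 0, w t * P t x y ^ p) ∂m :=
        lintegral_mono fun y => rpow_lintegral_Ioi_exp_neg_mul_le hpq haq (by linarith)
          (hmeas.comp (by fun_prop : Measurable fun t : ℝ => (t, x, y)))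
    _ = H * ∫⁻ t in Ioi 0, w t * ∫⁻ y, P t x y ^ p ∂m := by
        rw [lintegral_const_mul' _ _ hH,
          lintegral_lintegral_heatKernel_rpow_swap hmeas (by fun_prop) p x]
    _ ≤ _ := by
        gcongr
        exact lintegral_Ioi_exp_neg_mul_mul_rpow_mul_le hα hβ hap (hLp x)

theorem exists_lintegral_heatResolvent_rpow_le_of_one_lt [SFinite m]
    (hmeas : Measurable (fun q : ℝ × E × E => P q.1 q.2.1 q.2.2)) {K β p : ℝ} (hK : 0 < K)
    (hβ : 0 ≤ β) (hβp : β < p) (hp : 1 < p)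
    (hLp : ∀ x : E, ∀ t : ℝ, 0 < t →
      ∫⁻ y, P t x y ^ p ∂m ≤ ENNReal.ofReal K * (ENNReal.ofReal t ^ (-β) + 1)) :
    ∃ C > (0:ℝ), ∀ α ≥ (1:ℝ), ∀ x : E,
      ∫⁻ y, heatResolvent P α x y ^ p ∂m ≤ ENNReal.ofReal (C * α ^ (β - p)) := by
  set q := p.conjExponent
  have hpq : p.HolderConjugate q := .conjExponent hp
  -- `a * p` is the midpoint of `(β - 1, p - 1)`, where both Gamma integrals converge
  set a := (β + p - 2) / (2 * p) with ha
  have hap : a * p = (β + p - 2) / 2 := by rw [ha]; field_simp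
  have haq : a * q * (p - 1) = a * p := by rw [mul_assoc, mul_comm q, hpq.sub_one_mul_conj]
  have haq1 : a * q < 1 := by
    have : a * q * (p - 1) < 1 * (p - 1) := by rw [haq, hap]; linarith
    exact lt_of_mul_lt_mul_right this (by linarith)
  set Γ₁ := Gamma (1 - a * q)
  have hΓ₁ : 0 < Γ₁ := Gamma_pos_of_pos (by linarith)
  set C₀ := K * (Gamma (a * p - β + 1) + Gamma (a * p + 1))
  have hC₀ : 0 < C₀ := mul_pos hK (add_pos (Gamma_pos_of_pos (by linarith))
    (Gamma_pos_of_pos (by linarith)))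
  refine ⟨Γ₁ ^ (p / q) * C₀, by positivity, fun α hα x => ?_⟩
  have hα0 : 0 < α := by linarith
  have hexp : β - p = (a * q - 1) * (p / q) + (β - a * p - 1) := by
    rw [hpq.div_conj_eq_sub_one]
    linear_combination -haq
  refine (lintegral_heatResolvent_rpow_le_of_holderConjugate hmeas hpq haq1 (by linarith) hβ
    hLp hα x).trans_eq ?_
  rw [← ENNReal.ofReal_mul hK.le,
    ENNReal.mul_rpow_of_nonneg _ _ (div_pos hpq.pos hpq.symm.pos).le, ← ENNReal.rpow_mul,
    ENNReal.ofReal_rpow_of_pos hΓ₁,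
    ENNReal.ofReal_mul (mul_pos (rpow_pos_of_pos hΓ₁ _) hC₀).le,
    ENNReal.ofReal_mul (rpow_pos_of_pos hΓ₁ _).le, ← ENNReal.ofReal_rpow_of_pos hα0, hexp,
    ENNReal.rpow_add _ _ (ENNReal.ofReal_pos.2 hα0).ne' ofReal_ne_top]
  ring

theorem exists_lintegral_heatResolvent_rpow_le [SFinite m]
    (hmeas : Measurable (fun q : ℝ × E × E => P q.1 q.2.1 q.2.2)) {K β p : ℝ} (hK : 0 < K)
    (hβ : 0 ≤ β) (hβp : β < p) (hp : 1 ≤ p)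
    (hLp : ∀ x : E, ∀ t : ℝ, 0 < t →
      ∫⁻ y, P t x y ^ p ∂m ≤ ENNReal.ofReal K * (ENNReal.ofReal t ^ (-β) + 1)) :
    ∃ C > (0:ℝ), ∀ α ≥ (1:ℝ), ∀ x : E,
      ∫⁻ y, heatResolvent P α x y ^ p ∂m ≤ ENNReal.ofReal (C * α ^ (β - p)) := by
  rcases hp.eq_or_lt with rfl | hp1
  · simp only [ENNReal.rpow_one] at hLp ⊢
    exact exists_lintegral_heatResolvent_le hmeas hK hβ hβp hLp
  · exact exists_lintegral_heatResolvent_rpow_le_of_one_lt hmeas hK hβ hβp hp1 hLp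

end HeatKernel

end

theorem stmt_11_general {E : Type*} [MetricSpace E] [MeasurableSpace E]
    (m : Measure E) [IsFiniteMeasure m]
    (d_f : ℝ) (hdf : 1 ≤ d_f)
    (P : ℝ → E → E → ℝ≥0∞)
    (hmeas : Measurable (fun q : ℝ × E × E => P q.1 q.2.1 q.2.2))
    (hsymm : ∀ t > (0:ℝ), ∀ x y : E, P t x y = P t y x)
    (hck : ∀ s > (0:ℝ), ∀ t > (0:ℝ), ∀ x y : E,
      P (t + s) x y = ∫⁻ z, P t x z * P s z y ∂m)
    (hsub : ∀ t > (0:ℝ), ∀ x : E, ∫⁻ y, P t x y ∂m ≤ 1)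
    (c₃ d_w : ℝ) (hc₃ : 0 < c₃) (hdw : 2 ≤ d_w)
    (hker : ∀ x y : E, ∀ t : ℝ, 0 < t → t ≤ 1 →
      P t x y ≤ ENNReal.ofReal c₃ *
        min (ENNReal.ofReal t ^ (-(d_f / d_w)))
          (ENNReal.ofReal t / ENNReal.ofReal (dist x y) ^ (d_f + d_w)))
    (p δ : ℝ) (hp : 1 ≤ p) (hδ0 : 0 < δ)
    (hcond : p * d_w * δ < d_f - p * (d_f - d_w)) :
    ∃ C > (0:ℝ), ∃ α₀ > (0:ℝ), ∀ α ≥ α₀,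
      (⨆ x : E, (∫⁻ y, heatResolvent P α x y ^ p ∂m) ^ (1/p))
        ≤ ENNReal.ofReal (C * α ^ (-δ)) := by
  have hdw0 : 0 < d_w := by linarith
  have hdiag : ∀ x y : E, ∀ t : ℝ, 0 < t → t ≤ 1 →
      P t x y ≤ ENNReal.ofReal c₃ * ENNReal.ofReal t ^ (-(d_f / d_w)) := fun x y t ht ht1 =>
    (hker x y t ht ht1).trans (by gcongr; exact min_le_left _ _)
  have hβ : 0 ≤ (p - 1) * (d_f / d_w) :=
    mul_nonneg (by linarith) (div_nonneg (by linarith) hdw0.le)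
  have hβδ : (p - 1) * (d_f / d_w) - p < -(δ * p) := by
    rw [mul_div_assoc', div_sub' hdw0.ne', div_lt_iff₀ hdw0]
    linarith
  obtain ⟨C, hC, hbound⟩ := exists_lintegral_heatResolvent_rpow_le hmeas
    (Real.rpow_pos_of_pos hc₃ (p - 1)) hβ
    (by linarith [mul_pos hδ0 (show (0:ℝ) < p by linarith)]) hp
    (fun x t ht => lintegral_heatKernel_rpow_le hsymm hck hsub hc₃.le hp hdiag x ht)
  refine ⟨C ^ (1 / p), by positivity, 1, one_pos, fun α hα => iSup_le fun x => ?_⟩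
  have hα0 : 0 < α := by linarith
  calc (∫⁻ y, heatResolvent P α x y ^ p ∂m) ^ (1 / p)
      ≤ ENNReal.ofReal (C * α ^ (-(δ * p))) ^ (1 / p) := by
        gcongr
        exact (hbound α hα x).trans (ENNReal.ofReal_le_ofReal
          (mul_le_mul_of_nonneg_left (Real.rpow_le_rpow_of_exponent_le hα hβδ.le) hC.le))
    _ = ENNReal.ofReal (C ^ (1 / p) * α ^ (-δ)) := by
        rw [ENNReal.ofReal_rpow_of_pos (by positivity), Real.mul_rpow hC.le (by positivity),
          ← Real.rpow_mul hα0.le, show -(δ * p) * (1 / p) = -δ by field_simp]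

theorem stmt_11 {E : Type*} [MetricSpace E] [MeasurableSpace E] [BorelSpace E]
    (m : Measure E) [IsFiniteMeasure m]
    (hdiam : Metric.diam (Set.univ : Set E) ≤ 1)
    (c₁ c₂ d_f : ℝ) (hc₁ : 0 < c₁) (hc₂ : 0 < c₂) (hdf : 1 ≤ d_f)
    (hvol : ∀ x : E, ∀ r : ℝ, 0 < r → r ≤ 1 →
      ENNReal.ofReal (c₁ * r ^ d_f) ≤ m (Metric.ball x r) ∧
      m (Metric.ball x r) ≤ ENNReal.ofReal (c₂ * r ^ d_f))
    (P : ℝ → E → E → ℝ≥0∞)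
    (hmeas : Measurable (fun q : ℝ × E × E => P q.1 q.2.1 q.2.2))
    (hsymm : ∀ t > (0:ℝ), ∀ x y : E, P t x y = P t y x)
    (hck : ∀ s > (0:ℝ), ∀ t > (0:ℝ), ∀ x y : E,
      P (t + s) x y = ∫⁻ z, P t x z * P s z y ∂m)
    (hsub : ∀ t > (0:ℝ), ∀ x : E, ∫⁻ y, P t x y ∂m ≤ 1)
    (c₃ d_w : ℝ) (hc₃ : 0 < c₃) (hdw : 2 ≤ d_w)
    (hker : ∀ x y : E, ∀ t : ℝ, 0 < t → t ≤ 1 →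
      P t x y ≤ ENNReal.ofReal c₃ *
        min (ENNReal.ofReal t ^ (-(d_f / d_w)))
          (ENNReal.ofReal t / ENNReal.ofReal (dist x y) ^ (d_f + d_w)))
    (p δ : ℝ) (hp : 1 ≤ p) (hδ0 : 0 < δ) (hδ1 : δ ≤ 1)
    (hcond : p * d_w * δ < d_f - p * (d_f - d_w)) :
    ∃ C > (0:ℝ), ∃ α₀ > (0:ℝ), ∀ α ≥ α₀,
      (⨆ x : E, (∫⁻ y, heatResolvent P α x y ^ p ∂m) ^ (1/p))
        ≤ ENNReal.ofReal (C * α ^ (-δ)) :=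
  stmt_11_general m d_f hdf P hmeas hsymm hck hsub c₃ d_w hc₃ hdw hker p δ hp hδ0 hcond
end

section
/- Let d ≥ 1 be an integer and p ∈ [1,∞). Then sup_{x∈ℝ^d} ∫_{ℝ^d} r_1(x,y)^p dy < ∞ if and only if d − p(d−2) > 0, where r_1(x,y) = (2π)^{−d/2} ∫_0^∞ t^{−d/2} exp(−(t + |x−y|²/(2t))) dt. -/
/-!
Since r₁(x, y) depends only on r = |x - y|, say r₁(x, y) = G(r), translation invariance makes
∫ r₁(x, y)^p dy independent of x, so the supremum is the single integral ∫ G(|y|)^p dy, which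
polar coordinates reduce to ∫₀^∞ r^(d-1) G(r)^p dr.

Restricting the t-integral to t ∈ (r², 2r²] gives G(r) ≥ c r^(2-d) for r ≤ 1, so the integral
diverges at the origin when p(d - 2) ≥ d. Conversely, bounding e^(-r²/(4t)) ≤ C (t/r²)^a gives
G(r) ≤ K r^(-2a) e^(-r/2) for every a > max(0, d/2 - 1), and when p(d - 2) < d such an a can be
taken with 2ap < d.
-/

open MeasureTheory ENNReal Set Filter

/-- The Gaussian (Brownian) heat kernel on `ℝ^d`. -/
noncomputable def gaussianKernel (d : ℕ) (t : ℝ)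
    (x y : EuclideanSpace ℝ (Fin d)) : ℝ≥0∞ :=
  ENNReal.ofReal ((2 * Real.pi * t) ^ (-(d:ℝ) / 2) *
    Real.exp (-(dist x y ^ 2) / (2 * t)))

/-- The α-order resolvent kernel of the Gaussian heat kernel on `ℝ^d`. -/
noncomputable def gaussianResolvent (d : ℕ) (α : ℝ)
    (x y : EuclideanSpace ℝ (Fin d)) : ℝ≥0∞ :=
  ∫⁻ t in Set.Ioi (0:ℝ), ENNReal.ofReal (Real.exp (-(α * t))) * gaussianKernel d t x y

lemma pow_sub_one_mul_rpow {n : ℕ} (hn : n ≠ 0) {r : ℝ} (hr : 0 < r) (s : ℝ) :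
    r ^ (n - 1) * r ^ s = r ^ (s + (n - 1)) := by
  rw [Real.rpow_add hr, ← Real.rpow_natCast, Nat.cast_sub (Nat.one_le_iff_ne_zero.2 hn),
    Nat.cast_one, mul_comm]

section NormRpow

variable {E : Type*} [NormedAddCommGroup E] [NormedSpace ℝ E] [FiniteDimensional ℝ E]
  [Nontrivial E] [MeasurableSpace E] [BorelSpace E] (μ : Measure E) [μ.IsAddHaarMeasure]

lemma integrable_norm_rpow_mul_exp_neg_mul_norm {s b : ℝ}
    (hs : -(Module.finrank ℝ E : ℝ) < s) (hb : 0 < b) :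
    Integrable (fun x : E ↦ ‖x‖ ^ s * Real.exp (-(b * ‖x‖))) μ := by
  rw [integrable_fun_norm_addHaar μ (f := fun r ↦ r ^ s * Real.exp (-(b * r)))]
  refine (integrableOn_rpow_mul_exp_neg_mul_rpow (s := s + (Module.finrank ℝ E - 1))
    (by linarith) one_pos hb).congr_fun (fun r (hr : 0 < r) ↦ ?_) measurableSet_Ioi
  dsimp only
  rw [smul_eq_mul, ← mul_assoc, pow_sub_one_mul_rpow Module.finrank_pos.ne' hr, Real.rpow_one,
    neg_mul]

lemma lintegral_ball_norm_rpow_eq_top {s r : ℝ} (hr : 0 < r)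
    (hs : s ≤ -(Module.finrank ℝ E : ℝ)) :
    ∫⁻ x in Metric.ball (0 : E) r, ENNReal.ofReal (‖x‖ ^ s) ∂μ = ⊤ := by
  by_contra h
  have hint : IntegrableOn (fun x : E ↦ ‖x‖ ^ s) (Metric.ball 0 r) μ :=
    (lintegral_ofReal_ne_top_iff_integrable (by fun_prop : Measurable _).aestronglyMeasurable
      (ae_of_all _ fun x ↦ Real.rpow_nonneg (norm_nonneg x) s)).1 h
  rw [integrableOn_fun_norm_addHaar μ (f := fun y ↦ y ^ s)] at hint
  have := (intervalIntegral.integrableOn_Ioo_rpow_iff hr).1 <|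
    hint.congr_fun (fun y hy ↦ pow_sub_one_mul_rpow Module.finrank_pos.ne' hy.1 s) measurableSet_Ioo
  linarith

end NormRpow

lemma Real.exp_neg_le_mul_rpow_neg {a u : ℝ} (ha : 0 < a) (hu : 0 < u) :
    Real.exp (-u) ≤ Real.exp (a * Real.log a - a) * u ^ (-a) := by
  rw [Real.rpow_def_of_pos hu, ← Real.exp_add, Real.exp_le_exp]
  have h := mul_le_mul_of_nonneg_left (Real.log_le_sub_one_of_pos (div_pos hu ha)) ha.le
  rw [Real.log_div hu.ne' ha.ne', mul_sub, mul_sub, mul_div_cancel₀ _ ha.ne'] at h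
  linarith

noncomputable def gaussianResolventProfile (d : ℕ) (r : ℝ) : ℝ≥0∞ :=
  ∫⁻ t in Ioi (0:ℝ), ENNReal.ofReal (Real.exp (-t)) *
    ENNReal.ofReal ((2 * Real.pi * t) ^ (-(d:ℝ) / 2) * Real.exp (-(r ^ 2) / (2 * t)))

lemma exp_neg_mul_heatKernel_le (d : ℕ) {a r t : ℝ} (ha : 0 < a) (hr : 0 < r) (ht : 0 < t) :
    Real.exp (-t) * ((2 * Real.pi * t) ^ (-(d:ℝ) / 2) * Real.exp (-(r ^ 2) / (2 * t))) ≤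
      (2 * Real.pi) ^ (-(d:ℝ) / 2) * Real.exp (a * Real.log a - a) * 4 ^ a *
        (r ^ (-(2 * a)) * Real.exp (-(1 / 2 * r))) * (t ^ (a - d / 2) * Real.exp (-(t / 2))) := by
  -- Split t + r²/(2t) = (t/2 + r²/(4t)) + r²/(4t) + t/2: the first group is ≥ r/2 (AM-GM), the
  -- second is traded for t^a r^(-2a), the last keeps the integral over t convergent.
  have hamgm : Real.exp (-(t / 2)) * Real.exp (-(r ^ 2 / (4 * t))) ≤ Real.exp (-(1 / 2 * r)) := by
    rw [← Real.exp_add, Real.exp_le_exp]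
    have : r ^ 2 / (4 * t) * (4 * t) = r ^ 2 := div_mul_cancel₀ _ (by positivity)
    nlinarith [sq_nonneg (t - r)]
  have hpow : Real.exp (-(r ^ 2 / (4 * t))) ≤
      Real.exp (a * Real.log a - a) * (4 ^ a * t ^ a * r ^ (-(2 * a))) := by
    refine (Real.exp_neg_le_mul_rpow_neg ha (by positivity)).trans_eq ?_
    rw [Real.div_rpow (by positivity) (by positivity), Real.rpow_neg (by positivity),
      Real.rpow_neg (by positivity), Real.mul_rpow (by norm_num) ht.le, ← Real.rpow_natCast,
      ← Real.rpow_mul hr.le, Real.rpow_neg hr.le]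
    field_simp
    norm_num
  have hsplit : Real.exp (-t) * Real.exp (-(r ^ 2) / (2 * t)) =
      Real.exp (-(t / 2)) * Real.exp (-(r ^ 2 / (4 * t))) * Real.exp (-(r ^ 2 / (4 * t))) *
        Real.exp (-(t / 2)) := by
    simp only [← Real.exp_add]
    congr 1
    field_simp
    ring
  calc Real.exp (-t) * ((2 * Real.pi * t) ^ (-(d:ℝ) / 2) * Real.exp (-(r ^ 2) / (2 * t)))
      = (2 * Real.pi) ^ (-(d:ℝ) / 2) * t ^ (-(d:ℝ) / 2) *
          (Real.exp (-(t / 2)) * Real.exp (-(r ^ 2 / (4 * t))) *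
            Real.exp (-(r ^ 2 / (4 * t))) * Real.exp (-(t / 2))) := by
        rw [← hsplit, Real.mul_rpow (by positivity) ht.le]
        ring
    _ ≤ (2 * Real.pi) ^ (-(d:ℝ) / 2) * t ^ (-(d:ℝ) / 2) *
          (Real.exp (-(1 / 2 * r)) * (Real.exp (a * Real.log a - a) *
            (4 ^ a * t ^ a * r ^ (-(2 * a)))) * Real.exp (-(t / 2))) := by
        gcongr
    _ = _ := by
        rw [show a - d / 2 = -(d:ℝ) / 2 + a by ring, Real.rpow_add ht]
        ring

lemma gaussianResolventProfile_le (d : ℕ) {a : ℝ} (ha : 0 < a) (had : (d:ℝ) / 2 - 1 < a) :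
    ∃ K : ℝ, 0 ≤ K ∧ ∀ r, 0 < r →
      gaussianResolventProfile d r ≤
        ENNReal.ofReal (K * (r ^ (-(2 * a)) * Real.exp (-(1 / 2 * r)))) := by
  set M := (2 * Real.pi) ^ (-(d:ℝ) / 2) * Real.exp (a * Real.log a - a) * 4 ^ a
  have hint : IntegrableOn (fun t : ℝ ↦ t ^ (a - d / 2) * Real.exp (-(t / 2))) (Ioi 0) := by
    refine (integrableOn_rpow_mul_exp_neg_mul_rpow (s := a - d / 2) (by linarith) one_pos
      (by norm_num : (0:ℝ) < 1 / 2)).congr_fun (fun t _ ↦ ?_) measurableSet_Ioi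
    simp only [Real.rpow_one]
    ring_nf
  refine ⟨M * ∫ t in Ioi 0, t ^ (a - d / 2) * Real.exp (-(t / 2)), ?_, fun r hr ↦ ?_⟩
  · exact mul_nonneg (by positivity)
      (setIntegral_nonneg measurableSet_Ioi fun t (ht : 0 < t) ↦ by positivity)
  calc gaussianResolventProfile d r
      ≤ ∫⁻ t in Ioi 0, ENNReal.ofReal (M * (r ^ (-(2 * a)) * Real.exp (-(1 / 2 * r))) *
          (t ^ (a - d / 2) * Real.exp (-(t / 2)))) :=
        setLIntegral_mono' measurableSet_Ioi fun t ht ↦ by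
          rw [← ENNReal.ofReal_mul (Real.exp_nonneg _)]
          exact ENNReal.ofReal_le_ofReal (exp_neg_mul_heatKernel_le d ha hr ht)
    _ = ENNReal.ofReal (∫ t in Ioi 0, M * (r ^ (-(2 * a)) * Real.exp (-(1 / 2 * r))) *
          (t ^ (a - d / 2) * Real.exp (-(t / 2)))) := by
        refine (ofReal_integral_eq_lintegral_ofReal (hint.const_mul _) ?_).symm
        filter_upwards [ae_restrict_mem measurableSet_Ioi] with t (ht : 0 < t)
        positivity
    _ = _ := by
        rw [integral_const_mul]
        ring_nf

lemma gaussianResolventProfile_ge (d : ℕ) : ∃ c : ℝ, 0 < c ∧ ∀ r, 0 < r → r ≤ 1 →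
    ENNReal.ofReal (c * r ^ (2 - (d:ℝ))) ≤ gaussianResolventProfile d r := by
  refine ⟨Real.exp (-(5 / 2)) * (4 * Real.pi) ^ (-(d:ℝ) / 2), by positivity, fun r hr hr1 ↦ ?_⟩
  -- On the window t ∈ (r², 2r²] the integrand is at least m ≍ r^(-d); the window has length r².
  set m := Real.exp (-2) * ((2 * Real.pi * (2 * r ^ 2)) ^ (-(d:ℝ) / 2) * Real.exp (-(1 / 2)))
  have hm : ∀ t ∈ Ioc (r ^ 2) (2 * r ^ 2), ENNReal.ofReal m ≤ ENNReal.ofReal (Real.exp (-t)) *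
      ENNReal.ofReal ((2 * Real.pi * t) ^ (-(d:ℝ) / 2) * Real.exp (-(r ^ 2) / (2 * t))) := by
    rintro t ⟨hlo, hhi⟩
    have ht : 0 < t := (pow_pos hr 2).trans hlo
    rw [← ENNReal.ofReal_mul (Real.exp_nonneg _)]
    refine ENNReal.ofReal_le_ofReal (mul_le_mul ?_ (mul_le_mul ?_ ?_ (by positivity)
      (by positivity)) (by positivity) (by positivity))
    · rw [Real.exp_le_exp]
      nlinarith
    · exact Real.rpow_le_rpow_of_nonpos (by positivity) (by nlinarith [Real.pi_pos])
        (by rw [neg_div, neg_nonpos]; positivity)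
    · rw [Real.exp_le_exp, neg_div, neg_le_neg_iff, div_le_div_iff₀ (by positivity) two_pos]
      linarith
  calc ENNReal.ofReal (Real.exp (-(5 / 2)) * (4 * Real.pi) ^ (-(d:ℝ) / 2) * r ^ (2 - (d:ℝ)))
      = ∫⁻ _ in Ioc (r ^ 2) (2 * r ^ 2), ENNReal.ofReal m := by
        rw [setLIntegral_const, Real.volume_Ioc, ← ENNReal.ofReal_mul (by positivity)]
        have hpow : (r ^ 2) ^ (-(d:ℝ) / 2) * r ^ 2 = r ^ (2 - (d:ℝ)) := by
          rw [← Real.rpow_natCast, ← Real.rpow_mul hr.le, ← Real.rpow_add hr]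
          congr 1
          push_cast
          ring
        have hexp : Real.exp (-2) * Real.exp (-(1 / 2)) = Real.exp (-(5 / 2)) := by
          rw [← Real.exp_add]
          norm_num
        rw [show (2:ℝ) * r ^ 2 - r ^ 2 = r ^ 2 by ring, ← hpow, ← hexp]
        congr 1
        simp only [m]
        rw [show 2 * Real.pi * (2 * r ^ 2) = 4 * Real.pi * r ^ 2 by ring,
          Real.mul_rpow (x := 4 * Real.pi) (by positivity) (by positivity)]
        ring
    _ ≤ ∫⁻ t in Ioc (r ^ 2) (2 * r ^ 2), ENNReal.ofReal (Real.exp (-t)) *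
          ENNReal.ofReal ((2 * Real.pi * t) ^ (-(d:ℝ) / 2) * Real.exp (-(r ^ 2) / (2 * t))) :=
        setLIntegral_mono' measurableSet_Ioc hm
    _ ≤ gaussianResolventProfile d r :=
        lintegral_mono_set fun t ht ↦ (pow_pos hr 2).trans ht.1

lemma gaussianResolvent_one_eq (d : ℕ) (x y : EuclideanSpace ℝ (Fin d)) :
    gaussianResolvent d 1 x y = gaussianResolventProfile d (dist x y) := by
  simp only [gaussianResolvent, gaussianKernel, gaussianResolventProfile, one_mul]

lemma lintegral_gaussianResolvent_rpow (d : ℕ) (p : ℝ) (x : EuclideanSpace ℝ (Fin d)) :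
    ∫⁻ y, gaussianResolvent d 1 x y ^ p =
      ∫⁻ y : EuclideanSpace ℝ (Fin d), gaussianResolventProfile d ‖y‖ ^ p := by
  simp_rw [gaussianResolvent_one_eq, dist_comm x, dist_eq_norm]
  exact lintegral_sub_right_eq_self (fun z ↦ gaussianResolventProfile d ‖z‖ ^ p) x

lemma lintegral_gaussianResolventProfile_rpow_lt_top {d : ℕ} (hd : 1 ≤ d) {p : ℝ} (hp : 0 < p)
    (hpd : p * (d - 2) < d) :
    ∫⁻ y : EuclideanSpace ℝ (Fin d), gaussianResolventProfile d ‖y‖ ^ p < ⊤ := by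
  have : NeZero d := ⟨by omega⟩
  -- `d / 2 - 1 < a` makes the integral over t converge, `2 * a * p < d` makes
  -- `‖y‖ ^ (-(2 * a * p))` integrable at the origin.
  obtain ⟨a, ha, had, hap⟩ : ∃ a : ℝ, 0 < a ∧ (d:ℝ) / 2 - 1 < a ∧ 2 * a * p < d := by
    have hlt : max 0 ((d:ℝ) / 2 - 1) < d / (2 * p) :=
      max_lt (by positivity) (by rw [lt_div_iff₀ (by positivity)]; linarith)
    refine ⟨(max 0 ((d:ℝ) / 2 - 1) + d / (2 * p)) / 2, ?_, ?_, ?_⟩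
    · linarith [le_max_left 0 ((d:ℝ) / 2 - 1)]
    · linarith [le_max_right 0 ((d:ℝ) / 2 - 1)]
    · rw [← lt_div_iff₀ hp, mul_comm, ← lt_div_iff₀ two_pos, div_div, mul_comm p]
      linarith
  obtain ⟨K, hK, hG⟩ := gaussianResolventProfile_le d ha had
  calc ∫⁻ y : EuclideanSpace ℝ (Fin d), gaussianResolventProfile d ‖y‖ ^ p
      ≤ ∫⁻ y : EuclideanSpace ℝ (Fin d),
          ENNReal.ofReal (K ^ p * (‖y‖ ^ (-(2 * a * p)) * Real.exp (-(p / 2 * ‖y‖)))) := by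
        refine lintegral_mono_ae ?_
        filter_upwards [Measure.ae_ne volume 0] with y hy
        have hy : 0 < ‖y‖ := norm_pos_iff.2 hy
        refine (ENNReal.rpow_le_rpow (hG _ hy) hp.le).trans_eq ?_
        rw [ENNReal.ofReal_rpow_of_nonneg (by positivity) hp.le, Real.mul_rpow hK (by positivity),
          Real.mul_rpow (by positivity) (by positivity), ← Real.rpow_mul hy.le, ← Real.exp_mul]
        ring_nf
    _ < ⊤ := by
        have hs : -(Module.finrank ℝ (EuclideanSpace ℝ (Fin d)) : ℝ) < -(2 * a * p) := by
          rw [finrank_euclideanSpace_fin]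
          linarith
        exact ((integrable_norm_rpow_mul_exp_neg_mul_norm volume hs
          (by positivity)).const_mul _).lintegral_lt_top

lemma lintegral_gaussianResolventProfile_rpow_eq_top {d : ℕ} {p : ℝ} (hp : 0 < p)
    (hpd : (d:ℝ) ≤ p * (d - 2)) :
    ∫⁻ y : EuclideanSpace ℝ (Fin d), gaussianResolventProfile d ‖y‖ ^ p = ⊤ := by
  have : NeZero d := ⟨by rintro rfl; norm_num at hpd; linarith⟩
  obtain ⟨c, hc, hG⟩ := gaussianResolventProfile_ge d
  have hball : ∫⁻ y in Metric.ball (0 : EuclideanSpace ℝ (Fin d)) 1,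
      ENNReal.ofReal (‖y‖ ^ (-(p * (d - 2)))) = ⊤ :=
    lintegral_ball_norm_rpow_eq_top volume one_pos (by rw [finrank_euclideanSpace_fin]; linarith)
  refine eq_top_iff.2 ?_
  calc ⊤ = ENNReal.ofReal (c ^ p) * ∫⁻ y in Metric.ball (0 : EuclideanSpace ℝ (Fin d)) 1,
        ENNReal.ofReal (‖y‖ ^ (-(p * (d - 2)))) := by
        rw [hball, ENNReal.mul_top (ENNReal.ofReal_pos.2 (by positivity)).ne']
    _ = ∫⁻ y in Metric.ball (0 : EuclideanSpace ℝ (Fin d)) 1,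
          ENNReal.ofReal (c ^ p) * ENNReal.ofReal (‖y‖ ^ (-(p * (d - 2)))) :=
        (lintegral_const_mul' _ _ ENNReal.ofReal_ne_top).symm
    _ ≤ ∫⁻ y in Metric.ball (0 : EuclideanSpace ℝ (Fin d)) 1,
          gaussianResolventProfile d ‖y‖ ^ p := by
        refine lintegral_mono_ae ?_
        filter_upwards [ae_restrict_mem measurableSet_ball,
          ae_restrict_of_ae (Measure.ae_ne volume 0)] with y hy1 hy0
        have hy0 : 0 < ‖y‖ := norm_pos_iff.2 hy0
        have hy1 : ‖y‖ ≤ 1 := (mem_ball_zero_iff.1 hy1).le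
        refine le_of_eq_of_le ?_ (ENNReal.rpow_le_rpow (hG _ hy0 hy1) hp.le)
        rw [ENNReal.ofReal_rpow_of_nonneg (by positivity) hp.le,
          ← ENNReal.ofReal_mul (by positivity),
          Real.mul_rpow hc.le (by positivity), ← Real.rpow_mul hy0.le]
        ring_nf
    _ ≤ ∫⁻ y, gaussianResolventProfile d ‖y‖ ^ p := setLIntegral_le_lintegral _ _

theorem stmt_12 (d : ℕ) (hd : 1 ≤ d) (p : ℝ) (hp : 1 ≤ p) :
    (⨆ x : EuclideanSpace ℝ (Fin d),
        ∫⁻ y, gaussianResolvent d 1 x y ^ p ∂(volume)) < ⊤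
      ↔ 0 < (d:ℝ) - p * ((d:ℝ) - 2) := by
  have hp0 : 0 < p := by linarith
  simp only [lintegral_gaussianResolvent_rpow, iSup_const]
  constructor
  · intro hfin
    by_contra! h
    exact hfin.ne (lintegral_gaussianResolventProfile_rpow_eq_top hp0 (by linarith))
  · intro h
    exact lintegral_gaussianResolventProfile_rpow_lt_top hd hp0 (by linarith)
end

section
/- Let d ≥ 2 be an integer, let p ∈ [1,∞) satisfy d − p(d−2) > 0, and let β satisfy 0 ≤ β < d − p(d−2). Then the measure |x|^{−β} dx belongs to the L^p-Kato class K^p for the Gaussian heat kernel, i.e. lim_{α→∞} sup_{x∈ℝ^d} ∫_{ℝ^d} r_α(x,y)^p |y|^{−β} dy = 0. -/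
open MeasureTheory ENNReal Set Filter

/-!
Choose `a` with `d/2 - 1 < a` and `2ap + β < d`; such an `a` exists exactly because
`β < d - p(d-2)`. Writing `αt + R²/(2t) = (αt/2 + R²/(4t)) + αt/2 + R²/(4t)`, AM-GM bounds the
first summand below by `√(α/2) R`, and `e^{-u} ≤ a^a u^{-a}` turns `e^{-R²/(4t)}` into a power
of `t` times `R^{-2a}`; the remaining time integral is a Gamma integral. Hence
`r_α(x,y) ≤ C (2/α)^{a-d/2+1} e^{-√(α/2)|x-y|} |x-y|^{-2a}`.
Both `e^{-br} r^{-2ap}` and `r^{-β}` decrease in `r`, so `f(|y-x|) g(|y|)` is at most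
`f(|y|) g(|y|) + f(|y-x|) g(|y-x|)`, and by translation invariance the `y`-integral is at most
twice a radial integral. Polar coordinates evaluate it as a constant times
`Γ(d - 2ap - β) (p√(α/2))^{2ap+β-d}`. Both powers of `α` tend to `0`.
-/

open Real

namespace Real

lemma exp_neg_le_rpow_mul_rpow_neg {a u : ℝ} (ha : 0 < a) (hu : 0 < u) :
    exp (-u) ≤ a ^ a * u ^ (-a) := by
  have hpow : (u / a) ^ a ≤ exp u :=
    calc (u / a) ^ a ≤ exp (u / a) ^ a :=
          rpow_le_rpow (by positivity) (by linarith [add_one_le_exp (u / a)]) ha.le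
      _ = exp u := by rw [← exp_mul, div_mul_cancel₀ u ha.ne']
  rw [div_rpow hu.le ha.le, div_le_iff₀ (by positivity)] at hpow
  rw [exp_neg, rpow_neg hu.le, ← div_eq_mul_inv, le_div_iff₀ (by positivity),
    inv_mul_le_iff₀ (exp_pos u)]
  linarith

lemma exp_neg_sq_div_le {a t R : ℝ} (ha : 0 < a) (ht : 0 < t) (hR : 0 < R) :
    exp (-(R ^ 2 / (4 * t))) ≤ (4 * a) ^ a * t ^ a * R ^ (-(2 * a)) := by
  refine (exp_neg_le_rpow_mul_rpow_neg ha (by positivity)).trans_eq ?_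
  rw [rpow_neg (by positivity), div_rpow (by positivity) (by positivity),
    mul_rpow (by norm_num) ht.le, mul_rpow (by norm_num) ha.le, rpow_neg hR.le, ← rpow_natCast,
    ← rpow_mul hR.le]
  push_cast
  field_simp

end Real

lemma exp_neg_mul_heatKernel_le_s15 (d : ℕ) {α a t R : ℝ} (hα : 0 ≤ α) (ha : 0 < a) (ht : 0 < t)
    (hR : 0 < R) :
    exp (-(α * t)) * ((2 * π * t) ^ (-(d : ℝ) / 2) * exp (-(R ^ 2) / (2 * t))) ≤
      (2 * π) ^ (-(d : ℝ) / 2) * (4 * a) ^ a * (exp (-(√(α / 2) * R)) * R ^ (-(2 * a))) *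
        (t ^ (a - d / 2) * exp (-(α / 2 * t))) := by
  set c := √(α / 2)
  have hc : c ^ 2 = α / 2 := sq_sqrt (by positivity)
  have amgm : c * R ≤ α / 2 * t + R ^ 2 / (4 * t) := by
    have : c ^ 2 * t + R ^ 2 / (4 * t) - c * R = (2 * c * t - R) ^ 2 / (4 * t) := by
      field_simp
      ring
    rw [← hc]
    nlinarith [show 0 ≤ (2 * c * t - R) ^ 2 / (4 * t) by positivity]
  have hsplit : exp (-(α * t)) * exp (-(R ^ 2) / (2 * t)) =
      exp (-(α / 2 * t + R ^ 2 / (4 * t))) * exp (-(α / 2 * t)) * exp (-(R ^ 2 / (4 * t))) := by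
    rw [← exp_add, ← exp_add, ← exp_add]
    congr 1
    field_simp
    ring
  have hpow :
      (2 * π * t) ^ (-(d : ℝ) / 2) * t ^ a = (2 * π) ^ (-(d : ℝ) / 2) * t ^ (a - d / 2) := by
    rw [mul_rpow (by positivity) ht.le, mul_assoc, ← rpow_add ht]
    ring_nf
  calc exp (-(α * t)) * ((2 * π * t) ^ (-(d : ℝ) / 2) * exp (-(R ^ 2) / (2 * t)))
      = (2 * π * t) ^ (-(d : ℝ) / 2) *
          (exp (-(α / 2 * t + R ^ 2 / (4 * t))) * exp (-(α / 2 * t)) *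
            exp (-(R ^ 2 / (4 * t)))) := by
        rw [← hsplit]
        ring
    _ ≤ (2 * π * t) ^ (-(d : ℝ) / 2) *
          (exp (-(c * R)) * exp (-(α / 2 * t)) * ((4 * a) ^ a * t ^ a * R ^ (-(2 * a)))) := by
        gcongr
        exact exp_neg_sq_div_le ha ht hR
    _ = _ := by
        linear_combination (4 * a) ^ a * exp (-(c * R)) * R ^ (-(2 * a)) * exp (-(α / 2 * t)) * hpow

lemma lintegral_Ioi_rpow_mul_exp_neg_mul {s r : ℝ} (hs : -1 < s) (hr : 0 < r) :
    ∫⁻ t in Ioi (0 : ℝ), ENNReal.ofReal (t ^ s * exp (-(r * t))) =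
      ENNReal.ofReal ((1 / r) ^ (s + 1) * Gamma (s + 1)) := by
  have hint : IntegrableOn (fun t : ℝ ↦ t ^ s * exp (-(r * t))) (Ioi 0) := by
    simpa using integrableOn_rpow_mul_exp_neg_mul_rpow hs zero_lt_one hr
  rw [← ofReal_integral_eq_lintegral_ofReal hint
    (ae_restrict_of_forall_mem measurableSet_Ioi fun t (ht : 0 < t) ↦ by positivity),
    ← integral_rpow_mul_exp_neg_mul_Ioi (by linarith) hr, add_sub_cancel_right]

-- Equal to `∞` for `r ≤ 0` when `η > 0`, which makes the resolvent bound hold on the diagonal.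
noncomputable def decayProfile (b η r : ℝ) : ℝ≥0∞ :=
  ENNReal.ofReal (Real.exp (-(b * r))) * ENNReal.ofReal r ^ (-η)

lemma gaussianResolvent_le_decayProfile (d : ℕ) {α a : ℝ} (hα : 0 < α) (ha : 0 < a)
    (had : (d : ℝ) / 2 - 1 < a) (x y : EuclideanSpace ℝ (Fin d)) :
    gaussianResolvent d α x y ≤
      ENNReal.ofReal ((2 * π) ^ (-(d : ℝ) / 2) * (4 * a) ^ a *
          ((1 / (α / 2)) ^ (a - d / 2 + 1) * Gamma (a - d / 2 + 1))) *
        decayProfile √(α / 2) (2 * a) (dist x y) := by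
  have hΓ : 0 < Gamma (a - d / 2 + 1) := Gamma_pos_of_pos (by linarith)
  rcases (dist_nonneg (x := x) (y := y)).eq_or_lt with hxy | hR
  · have hconst : 0 < (2 * π) ^ (-(d : ℝ) / 2) * (4 * a) ^ a *
        ((1 / (α / 2)) ^ (a - d / 2 + 1) * Gamma (a - d / 2 + 1)) := by
      positivity
    have hprofile : decayProfile √(α / 2) (2 * a) (dist x y) = ⊤ := by
      simp [decayProfile, ← hxy, ENNReal.zero_rpow_of_neg, ha]
    rw [hprofile, ENNReal.mul_top (ENNReal.ofReal_pos.2 hconst).ne']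
    exact le_top
  set R := dist x y
  calc gaussianResolvent d α x y
      = ∫⁻ t in Ioi (0 : ℝ), ENNReal.ofReal (exp (-(α * t)) *
          ((2 * π * t) ^ (-(d : ℝ) / 2) * exp (-(R ^ 2) / (2 * t)))) := by
        refine setLIntegral_congr_fun measurableSet_Ioi fun t _ ↦ ?_
        rw [gaussianKernel, ENNReal.ofReal_mul (exp_nonneg _)]
    _ ≤ ∫⁻ t in Ioi (0 : ℝ), ENNReal.ofReal ((2 * π) ^ (-(d : ℝ) / 2) * (4 * a) ^ a *
          (exp (-(√(α / 2) * R)) * R ^ (-(2 * a))) * (t ^ (a - d / 2) * exp (-(α / 2 * t)))) :=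
        setLIntegral_mono' measurableSet_Ioi fun t ht ↦
          ENNReal.ofReal_le_ofReal (exp_neg_mul_heatKernel_le_s15 d hα.le ha ht hR)
    _ = ENNReal.ofReal ((2 * π) ^ (-(d : ℝ) / 2) * (4 * a) ^ a *
          (exp (-(√(α / 2) * R)) * R ^ (-(2 * a)))) *
          ∫⁻ t in Ioi (0 : ℝ), ENNReal.ofReal (t ^ (a - d / 2) * exp (-(α / 2 * t))) := by
        rw [← lintegral_const_mul' _ _ ENNReal.ofReal_ne_top]
        refine setLIntegral_congr_fun measurableSet_Ioi fun t ht ↦ ?_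
        rw [ENNReal.ofReal_mul (by positivity)]
    _ = _ := by
        rw [lintegral_Ioi_rpow_mul_exp_neg_mul (by linarith) (by positivity), decayProfile,
          ENNReal.ofReal_rpow_of_pos hR, ← ENNReal.ofReal_mul (exp_nonneg _),
          ← ENNReal.ofReal_mul (by positivity), ← ENNReal.ofReal_mul (by positivity)]
        congr 1
        ring

lemma antitone_ofReal_rpow_neg {η : ℝ} (hη : 0 ≤ η) :
    Antitone fun r : ℝ ↦ ENNReal.ofReal r ^ (-η) := fun r s hrs ↦ by
  simp only [ENNReal.rpow_neg]
  exact ENNReal.inv_le_inv.2 (ENNReal.rpow_le_rpow (ENNReal.ofReal_le_ofReal hrs) hη)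

lemma antitone_decayProfile {b η : ℝ} (hb : 0 ≤ b) (hη : 0 ≤ η) :
    Antitone (decayProfile b η) :=
  Antitone.mul' (fun r s hrs ↦ ENNReal.ofReal_le_ofReal (Real.exp_le_exp.2 (by nlinarith)))
    (antitone_ofReal_rpow_neg hη)

lemma decayProfile_rpow {p : ℝ} (hp : 0 ≤ p) (b η r : ℝ) :
    decayProfile b η r ^ p = decayProfile (p * b) (η * p) r := by
  rw [decayProfile, decayProfile, ENNReal.mul_rpow_of_nonneg _ _ hp,
    ENNReal.ofReal_rpow_of_nonneg (Real.exp_nonneg _) hp, ← Real.exp_mul, ← ENNReal.rpow_mul]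
  ring_nf

lemma decayProfile_mul_ofReal_rpow_neg {η β : ℝ} (hη : 0 ≤ η) (hβ : 0 ≤ β) (b r : ℝ) :
    decayProfile b η r * ENNReal.ofReal r ^ (-β) = decayProfile b (η + β) r := by
  simp only [decayProfile, mul_assoc, ENNReal.rpow_neg, ← ENNReal.inv_rpow]
  rw [ENNReal.rpow_add_of_nonneg _ _ hη hβ]

lemma lintegral_decayProfile_norm {E : Type*} [NormedAddCommGroup E] [NormedSpace ℝ E]
    [FiniteDimensional ℝ E] [MeasurableSpace E] [BorelSpace E] [Nontrivial E] (μ : Measure E)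
    [μ.IsAddHaarMeasure] {b η : ℝ} (hb : 0 < b) (hη : η < Module.finrank ℝ E) :
    ∫⁻ w, decayProfile b η ‖w‖ ∂μ =
      ENNReal.ofReal (Module.finrank ℝ E * μ.real (Metric.ball 0 1) *
        ((1 / b) ^ (Module.finrank ℝ E - η) * Gamma (Module.finrank ℝ E - η))) := by
  set n := Module.finrank ℝ E
  have hn : 1 ≤ n := Module.finrank_pos
  set F : ℝ → ℝ := fun r ↦ exp (-(b * r)) * r ^ (-η)
  have hprofile : (fun w ↦ decayProfile b η ‖w‖) =ᵐ[μ] fun w ↦ ENNReal.ofReal (F ‖w‖) := by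
    filter_upwards [μ.ae_ne 0] with w hw
    rw [decayProfile, ENNReal.ofReal_rpow_of_pos (norm_pos_iff.2 hw),
      ← ENNReal.ofReal_mul (exp_nonneg _)]
  have hpolar : EqOn (fun y : ℝ ↦ y ^ (n - 1) • F y)
      (fun y ↦ y ^ ((n - η) - 1) * exp (-(b * y))) (Ioi 0) := fun y (hy : 0 < y) ↦ by
    dsimp only [F]
    rw [smul_eq_mul, ← Real.rpow_natCast, Nat.cast_sub hn, Nat.cast_one, mul_left_comm,
      ← rpow_add hy]
    ring_nf
  have hint : IntegrableOn (fun y : ℝ ↦ y ^ (n - 1) • F y) (Ioi 0) := by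
    refine IntegrableOn.congr_fun ?_ hpolar.symm measurableSet_Ioi
    simpa using integrableOn_rpow_mul_exp_neg_mul_rpow (s := (n - η) - 1) (by linarith)
      zero_lt_one hb
  rw [lintegral_congr_ae hprofile, ← ofReal_integral_eq_lintegral_ofReal
      ((integrable_fun_norm_addHaar μ).2 hint) (.of_forall fun w ↦ by positivity),
    integral_fun_norm_addHaar, setIntegral_congr_fun measurableSet_Ioi hpolar,
    integral_rpow_mul_exp_neg_mul_Ioi (by linarith) hb, nsmul_eq_mul, smul_eq_mul, mul_assoc]

lemma mul_le_mul_add_mul_of_antitone {ι : Type*} [LinearOrder ι] {f g : ι → ℝ≥0∞}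
    (hf : Antitone f) (hg : Antitone g) (s t : ι) :
    f s * g t ≤ f t * g t + f s * g s := by
  rcases le_total t s with h | h
  · exact (mul_le_mul' (hf h) le_rfl).trans le_self_add
  · exact (mul_le_mul' le_rfl (hg h)).trans le_add_self

lemma lintegral_norm_sub_mul_le_of_antitone {E : Type*} [NormedAddCommGroup E] [MeasurableSpace E]
    [BorelSpace E] (μ : Measure E) [μ.IsAddRightInvariant] {f g : ℝ → ℝ≥0∞}
    (hf : Antitone f) (hg : Antitone g) (x : E) :
    ∫⁻ y, f ‖y - x‖ * g ‖y‖ ∂μ ≤ 2 * ∫⁻ w, f ‖w‖ * g ‖w‖ ∂μ := by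
  have hmeas : Measurable fun w : E ↦ f ‖w‖ * g ‖w‖ :=
    (hf.measurable.comp measurable_norm).mul (hg.measurable.comp measurable_norm)
  calc ∫⁻ y, f ‖y - x‖ * g ‖y‖ ∂μ
      ≤ ∫⁻ y, (f ‖y‖ * g ‖y‖ + f ‖y - x‖ * g ‖y - x‖) ∂μ :=
        lintegral_mono fun y ↦ mul_le_mul_add_mul_of_antitone hf hg _ _
    _ = 2 * ∫⁻ w, f ‖w‖ * g ‖w‖ ∂μ := by
        rw [lintegral_add_left hmeas, lintegral_sub_right_eq_self (fun w ↦ f ‖w‖ * g ‖w‖) x,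
          two_mul]

lemma lintegral_gaussianResolvent_rpow_mul_le {d : ℕ} (hd : 1 ≤ d) {α a p β : ℝ} (hα : 0 < α)
    (ha : 0 < a) (had : (d : ℝ) / 2 - 1 < a) (hp : 0 < p) (hβ : 0 ≤ β)
    (hη : 2 * a * p + β < d) (x : EuclideanSpace ℝ (Fin d)) :
    ∫⁻ y, gaussianResolvent d α x y ^ p * ENNReal.ofReal ‖y‖ ^ (-β) ≤
      ENNReal.ofReal ((2 * π) ^ (-(d : ℝ) / 2) * (4 * a) ^ a *
          ((1 / (α / 2)) ^ (a - d / 2 + 1) * Gamma (a - d / 2 + 1))) ^ p *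
        (2 * ENNReal.ofReal (d * volume.real (Metric.ball (0 : EuclideanSpace ℝ (Fin d)) 1) *
          ((1 / (p * √(α / 2))) ^ (d - (2 * a * p + β)) * Gamma (d - (2 * a * p + β))))) := by
  have : NeZero d := ⟨by omega⟩
  set C := (2 * π) ^ (-(d : ℝ) / 2) * (4 * a) ^ a *
    ((1 / (α / 2)) ^ (a - d / 2 + 1) * Gamma (a - d / 2 + 1))
  calc ∫⁻ y, gaussianResolvent d α x y ^ p * ENNReal.ofReal ‖y‖ ^ (-β)
      ≤ ∫⁻ y, ENNReal.ofReal C ^ p *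
          (decayProfile (p * √(α / 2)) (2 * a * p) ‖y - x‖ * ENNReal.ofReal ‖y‖ ^ (-β)) :=
        lintegral_mono fun y ↦ by
          rw [← mul_assoc, ← decayProfile_rpow hp.le, ← ENNReal.mul_rpow_of_nonneg _ _ hp.le,
            ← dist_eq_norm, dist_comm]
          gcongr
          exact gaussianResolvent_le_decayProfile d hα ha had x y
    _ ≤ ENNReal.ofReal C ^ p * (2 * ∫⁻ w,
          decayProfile (p * √(α / 2)) (2 * a * p) ‖w‖ * ENNReal.ofReal ‖w‖ ^ (-β)) := by
        rw [lintegral_const_mul' _ _ (by simp [hp.le])]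
        gcongr
        exact lintegral_norm_sub_mul_le_of_antitone volume
          (antitone_decayProfile (by positivity) (by positivity)) (antitone_ofReal_rpow_neg hβ) x
    _ = _ := by
        simp_rw [decayProfile_mul_ofReal_rpow_neg (by positivity : 0 ≤ 2 * a * p) hβ]
        rw [lintegral_decayProfile_norm volume (by positivity) (by simpa using hη),
          finrank_euclideanSpace_fin]

lemma tendsto_ofReal_mul_one_div_rpow_mul {f : ℝ → ℝ} (hf : Tendsto f atTop atTop) {s : ℝ}
    (hs : 0 < s) (c c' : ℝ) :
    Tendsto (fun α ↦ ENNReal.ofReal (c * ((1 / f α) ^ s * c'))) atTop (nhds 0) := by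
  have h := ((tendsto_const_nhds (x := (1 : ℝ))).div_atTop hf).rpow_const (p := s) (Or.inr hs.le)
  rw [Real.zero_rpow hs.ne'] at h
  simpa using ENNReal.tendsto_ofReal ((h.mul_const c').const_mul c)

lemma tendsto_iSup_lintegral_gaussianResolvent_rpow_mul {d : ℕ} (hd : 1 ≤ d) {a p β : ℝ}
    (ha : 0 < a) (had : (d : ℝ) / 2 - 1 < a) (hp : 0 < p) (hβ : 0 ≤ β)
    (hη : 2 * a * p + β < d) :
    Tendsto (fun α : ℝ ↦ ⨆ x : EuclideanSpace ℝ (Fin d),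
        ∫⁻ y, gaussianResolvent d α x y ^ p * ENNReal.ofReal ‖y‖ ^ (-β)) atTop (nhds 0) := by
  refine tendsto_of_tendsto_of_tendsto_of_le_of_le' tendsto_const_nhds ?_
    (.of_forall fun _ ↦ zero_le) ((eventually_gt_atTop 0).mono fun α hα ↦
      iSup_le (lintegral_gaussianResolvent_rpow_mul_le hd hα ha had hp hβ hη))
  have hhalf : Tendsto (fun α : ℝ ↦ α / 2) atTop atTop := tendsto_id.atTop_div_const two_pos
  rw [← mul_zero (0 : ℝ≥0∞)]
  refine ENNReal.Tendsto.mul ?_ (Or.inr ENNReal.zero_ne_top) ?_ (Or.inr ENNReal.zero_ne_top)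
  · rw [← ENNReal.zero_rpow_of_pos hp]
    exact (ENNReal.continuous_rpow_const.tendsto 0).comp
      (tendsto_ofReal_mul_one_div_rpow_mul hhalf (by linarith) _ _)
  · rw [← mul_zero (2 : ℝ≥0∞)]
    exact ENNReal.Tendsto.const_mul (tendsto_ofReal_mul_one_div_rpow_mul
      ((tendsto_sqrt_atTop.comp hhalf).const_mul_atTop hp) (by linarith) _ _)
      (Or.inr ENNReal.ofNat_ne_top)

theorem stmt_15_general (d : ℕ) (hd : 2 ≤ d) (p : ℝ) (hp : 1 ≤ p)
    (β : ℝ) (hβ0 : 0 ≤ β) (hβ : β < (d:ℝ) - p * ((d:ℝ) - 2)) :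
    Tendsto (fun α : ℝ =>
        ⨆ x : EuclideanSpace ℝ (Fin d),
          ∫⁻ y, gaussianResolvent d α x y ^ p * ENNReal.ofReal ‖y‖ ^ (-β) ∂(volume))
        atTop (nhds 0) := by
  have hp0 : 0 < p := by linarith
  have hd2 : (2 : ℝ) ≤ d := by exact_mod_cast hd
  obtain ⟨a, had, haβ⟩ : ∃ a, (d : ℝ) / 2 - 1 < a ∧ a < (d - β) / (2 * p) :=
    exists_between (by rw [lt_div_iff₀ (by positivity)]; nlinarith)
  rw [lt_div_iff₀ (by positivity)] at haβ
  exact tendsto_iSup_lintegral_gaussianResolvent_rpow_mul (by omega) (by linarith) had hp0 hβ0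
    (by linarith)

theorem stmt_15 (d : ℕ) (hd : 2 ≤ d) (p : ℝ) (hp : 1 ≤ p)
    (hpd : 0 < (d:ℝ) - p * ((d:ℝ) - 2))
    (β : ℝ) (hβ0 : 0 ≤ β) (hβ : β < (d:ℝ) - p * ((d:ℝ) - 2)) :
    Tendsto (fun α : ℝ =>
        ⨆ x : EuclideanSpace ℝ (Fin d),
          ∫⁻ y, gaussianResolvent d α x y ^ p * ENNReal.ofReal ‖y‖ ^ (-β) ∂(volume))
        atTop (nhds 0) :=
  stmt_15_general d hd p hp β hβ0 hβ
end

section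
/- Let d ≥ 1 be an integer and p ∈ [1,∞) with 2p − d(p−1) > 0. Then for every t > 0, ∫_{ℝ^d} ( ∫_0^t (2πs)^{−d/2} e^{−|x|²/(2s)} ds )^p dx ≤ (2π)^{−d(p−1)/2} · p^{−d/2} · ( 2p/(2p − d(p−1)) )^p · t^{(2p − d(p−1))/2}. -/
open MeasureTheory ENNReal Set Filter

/-! Write the heat kernel as `G_s(x) = w(s) h(s,x)` with `w(s) = s^(-β)`, `β = d(p-1)/(2p) < 1`,
and apply Hölder's inequality against the weight `w` on `(0,t)`:
`(∫ w h)^p ≤ (∫ w h^p) (∫ w)^(p-1)`. After integrating in `x` and exchanging the integrals,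
the Gaussian integral `‖G_s‖_p^p = (2π)^(-d(p-1)/2) p^(-d/2) s^(-d(p-1)/2)` shows that
`∫ h(s,x)^p dx = ‖s^β G_s‖_p^p` does not depend on `s`, since `βp = d(p-1)/2`;
what remains is `∫_0^t w = t^(1-β)/(1-β)`. -/

open Real

theorem ENNReal.lintegral_mul_rpow_le {α : Type*} [MeasurableSpace α] {μ : Measure α}
    {w h : α → ℝ≥0∞} (hw : AEMeasurable w μ) (hh : AEMeasurable h μ) {p : ℝ} (hp : 1 ≤ p) :
    (∫⁻ a, w a * h a ∂μ) ^ p ≤ (∫⁻ a, w a * h a ^ p ∂μ) * (∫⁻ a, w a ∂μ) ^ (p - 1) := by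
  have hp0 : 0 < p := one_pos.trans_le hp
  have hq : 0 ≤ 1 - 1 / p := sub_nonneg.2 ((div_le_one hp0).2 hp)
  have holder : ∫⁻ a, w a * h a ∂μ ≤
      (∫⁻ a, w a * h a ^ p ∂μ) ^ (1 / p) * (∫⁻ a, w a ∂μ) ^ (1 - 1 / p) := by
    refine le_of_eq_of_le (lintegral_congr fun a => ?_)
      (lintegral_mul_norm_pow_le (hw.mul (hh.pow_const p)) hw (by positivity) hq (by ring))
    change _ = (w a * h a ^ p) ^ (1 / p) * w a ^ (1 - 1 / p)
    rw [ENNReal.mul_rpow_of_nonneg _ _ (by positivity), ← ENNReal.rpow_mul,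
      mul_one_div_cancel hp0.ne', ENNReal.rpow_one, mul_right_comm,
      ← ENNReal.rpow_add_of_nonneg _ _ (by positivity) hq, add_sub_cancel, ENNReal.rpow_one]
  calc (∫⁻ a, w a * h a ∂μ) ^ p
      ≤ ((∫⁻ a, w a * h a ^ p ∂μ) ^ (1 / p) * (∫⁻ a, w a ∂μ) ^ (1 - 1 / p)) ^ p :=
        ENNReal.rpow_le_rpow holder hp0.le
    _ = (∫⁻ a, w a * h a ^ p ∂μ) * (∫⁻ a, w a ∂μ) ^ (p - 1) := by
        rw [ENNReal.mul_rpow_of_nonneg _ _ hp0.le, ← ENNReal.rpow_mul, ← ENNReal.rpow_mul,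
          one_div_mul_cancel hp0.ne', ENNReal.rpow_one, sub_mul, one_div_mul_cancel hp0.ne',
          one_mul]

theorem lintegral_rpow_lintegral_mul_le {α β : Type*} [MeasurableSpace α] [MeasurableSpace β]
    {μ : Measure α} {ν : Measure β} [SFinite μ] [SFinite ν] {w : α → ℝ≥0∞}
    {h : α → β → ℝ≥0∞} (hw : Measurable w) (hh : Measurable (Function.uncurry h))
    {p : ℝ} (hp : 1 ≤ p) :
    ∫⁻ b, (∫⁻ a, w a * h a b ∂μ) ^ p ∂ν ≤
      (∫⁻ a, w a * ∫⁻ b, h a b ^ p ∂ν ∂μ) * (∫⁻ a, w a ∂μ) ^ (p - 1) := by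
  have hwh : Measurable (Function.uncurry fun a b => w a * h a b ^ p) :=
    (hw.comp measurable_fst).mul (hh.pow_const p)
  calc ∫⁻ b, (∫⁻ a, w a * h a b ∂μ) ^ p ∂ν
      ≤ ∫⁻ b, (∫⁻ a, w a * h a b ^ p ∂μ) * (∫⁻ a, w a ∂μ) ^ (p - 1) ∂ν :=
        lintegral_mono fun b => ENNReal.lintegral_mul_rpow_le hw.aemeasurable
          (hh.comp (measurable_id.prodMk measurable_const)).aemeasurable hp
    _ = (∫⁻ b, ∫⁻ a, w a * h a b ^ p ∂μ ∂ν) * (∫⁻ a, w a ∂μ) ^ (p - 1) :=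
        lintegral_mul_const _ hwh.lintegral_prod_left'
    _ = (∫⁻ a, w a * ∫⁻ b, h a b ^ p ∂ν ∂μ) * (∫⁻ a, w a ∂μ) ^ (p - 1) := by
        rw [← lintegral_lintegral_swap hwh.aemeasurable]
        congr 1
        exact lintegral_congr fun a =>
          lintegral_const_mul _ ((hh.comp (measurable_const.prodMk measurable_id)).pow_const p)

theorem setLIntegral_Ioc_ofReal_rpow {r : ℝ} (hr : -1 < r) {t : ℝ} (ht : 0 ≤ t) :
    ∫⁻ s in Ioc 0 t, ENNReal.ofReal (s ^ r) = ENNReal.ofReal (t ^ (r + 1) / (r + 1)) := by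
  have hint : IntegrableOn (fun s : ℝ => s ^ r) (Ioc 0 t) :=
    (intervalIntegrable_iff_integrableOn_Ioc_of_le ht).1
      (intervalIntegral.intervalIntegrable_rpow' hr)
  rw [← ofReal_integral_eq_lintegral_ofReal hint
    ((ae_restrict_iff' measurableSet_Ioc).2 (ae_of_all _ fun s hs => rpow_nonneg hs.1.le r)),
    ← intervalIntegral.integral_of_le ht, integral_rpow (Or.inl hr),
    zero_rpow (by linarith), sub_zero]

theorem lintegral_ofReal_exp_neg_mul_norm_sq {V : Type*} [NormedAddCommGroup V]
    [InnerProductSpace ℝ V] [FiniteDimensional ℝ V] [MeasurableSpace V] [BorelSpace V]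
    {b : ℝ} (hb : 0 < b) :
    ∫⁻ x : V, ENNReal.ofReal (exp (-b * ‖x‖ ^ 2)) =
      ENNReal.ofReal ((π / b) ^ (Module.finrank ℝ V / 2 : ℝ)) := by
  have hval := GaussianFourier.integral_rexp_neg_mul_sq_norm (V := V) hb
  have hint : Integrable fun x : V => exp (-b * ‖x‖ ^ 2) :=
    .of_integral_ne_zero (hval ▸ (rpow_pos_of_pos (by positivity) _).ne')
  rw [← ofReal_integral_eq_lintegral_ofReal hint (ae_of_all _ fun x => (exp_pos _).le), hval]

noncomputable def heatKernel (d : ℕ) (s : ℝ) (x : EuclideanSpace ℝ (Fin d)) : ℝ :=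
  (2 * π * s) ^ (-(d : ℝ) / 2) * exp (-(‖x‖ ^ 2) / (2 * s))

theorem lintegral_ofReal_heatKernel_rpow (d : ℕ) {s : ℝ} (hs : 0 < s) {p : ℝ} (hp : 0 < p) :
    ∫⁻ x, ENNReal.ofReal (heatKernel d s x) ^ p =
      ENNReal.ofReal ((2 * π) ^ (-(d : ℝ) * (p - 1) / 2) * p ^ (-(d : ℝ) / 2) *
        s ^ (-(d : ℝ) * (p - 1) / 2)) := by
  have h2πs : 0 < 2 * π * s := by positivity
  have hpow : ∀ x, ENNReal.ofReal (heatKernel d s x) ^ p =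
      ENNReal.ofReal ((2 * π * s) ^ (-(d : ℝ) * p / 2)) *
        ENNReal.ofReal (exp (-(p / (2 * s)) * ‖x‖ ^ 2)) := by
    intro x
    rw [heatKernel, ENNReal.ofReal_rpow_of_nonneg (by positivity) hp.le, ← ENNReal.ofReal_mul
      (by positivity), mul_rpow (by positivity) (exp_pos _).le, ← rpow_mul h2πs.le,
      ← exp_mul]
    congr 3 <;> ring
  simp_rw [hpow]
  rw [lintegral_const_mul _ (by fun_prop), lintegral_ofReal_exp_neg_mul_norm_sq (by positivity),
    finrank_euclideanSpace_fin, ← ENNReal.ofReal_mul (by positivity)]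
  congr 1
  rw [show π / (p / (2 * s)) = 2 * π * s / p by field_simp, div_rpow h2πs.le hp.le,
    mul_div_assoc', ← rpow_add h2πs, show -(d : ℝ) * p / 2 + d / 2 = -d * (p - 1) / 2 by ring,
    mul_rpow (by positivity) hs.le, neg_div, rpow_neg hp.le, div_eq_mul_inv]
  ring

theorem lintegral_ofReal_rpow_mul_heatKernel_rpow (d : ℕ) {s : ℝ} (hs : 0 < s) {p : ℝ}
    (hp : 0 < p) :
    ∫⁻ x, ENNReal.ofReal (s ^ ((d : ℝ) * (p - 1) / (2 * p)) * heatKernel d s x) ^ p =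
      ENNReal.ofReal ((2 * π) ^ (-(d : ℝ) * (p - 1) / 2) * p ^ (-(d : ℝ) / 2)) := by
  simp_rw [ENNReal.ofReal_mul (rpow_nonneg hs.le _), ENNReal.mul_rpow_of_nonneg _ _ hp.le]
  rw [lintegral_const_mul _ (by unfold heatKernel; fun_prop),
    lintegral_ofReal_heatKernel_rpow d hs hp,
    ENNReal.ofReal_rpow_of_nonneg (rpow_nonneg hs.le _) hp.le,
    ← ENNReal.ofReal_mul (rpow_nonneg (rpow_nonneg hs.le _) _), mul_left_comm,
    ← rpow_mul hs.le, ← rpow_add hs,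
    show (d : ℝ) * (p - 1) / (2 * p) * p + -d * (p - 1) / 2 = 0 by field_simp; ring,
    Real.rpow_zero, mul_one]

theorem stmt_17_general (d : ℕ) (p : ℝ) (hp : 1 ≤ p)
    (hpd : 0 < 2 * p - (d:ℝ) * (p - 1)) (t : ℝ) (ht : 0 < t) :
    ∫⁻ x : EuclideanSpace ℝ (Fin d),
        (∫⁻ s in Set.Ioc (0:ℝ) t,
          ENNReal.ofReal ((2 * Real.pi * s) ^ (-(d:ℝ) / 2) *
            Real.exp (-(‖x‖ ^ 2) / (2 * s)))) ^ p ∂(volume)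
      ≤ ENNReal.ofReal ((2 * Real.pi) ^ (-(d:ℝ) * (p - 1) / 2) *
          p ^ (-(d:ℝ) / 2) *
          (2 * p / (2 * p - (d:ℝ) * (p - 1))) ^ p *
          t ^ ((2 * p - (d:ℝ) * (p - 1)) / 2)) := by
  have hp0 : 0 < p := one_pos.trans_le hp
  set β := (d : ℝ) * (p - 1) / (2 * p) with hβ
  have h1β : 1 - β = (2 * p - d * (p - 1)) / (2 * p) := by rw [hβ]; field_simp
  have h1β_pos : 0 < 1 - β := h1β ▸ by positivity
  have hsplit : ∀ x, ∫⁻ s in Ioc 0 t, ENNReal.ofReal (heatKernel d s x) =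
      ∫⁻ s in Ioc 0 t, ENNReal.ofReal (s ^ (-β)) * ENNReal.ofReal (s ^ β * heatKernel d s x) :=
    fun x => setLIntegral_congr_fun measurableSet_Ioc fun s hs => by
      rw [← ENNReal.ofReal_mul (rpow_nonneg hs.1.le _), ← mul_assoc, ← rpow_add hs.1]
      simp
  have hweight : ∫⁻ s in Ioc 0 t, ENNReal.ofReal (s ^ (-β)) =
      ENNReal.ofReal (t ^ (1 - β) / (1 - β)) := by
    simpa [neg_add_eq_sub] using setLIntegral_Ioc_ofReal_rpow (r := -β) (by linarith) ht.le
  calc _ = ∫⁻ x, (∫⁻ s in Ioc 0 t, ENNReal.ofReal (s ^ (-β)) *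
          ENNReal.ofReal (s ^ β * heatKernel d s x)) ^ p :=
        lintegral_congr fun x => by rw [← hsplit]; rfl
    _ ≤ (∫⁻ s in Ioc 0 t, ENNReal.ofReal (s ^ (-β)) *
          ∫⁻ x, ENNReal.ofReal (s ^ β * heatKernel d s x) ^ p) *
          (∫⁻ s in Ioc 0 t, ENNReal.ofReal (s ^ (-β))) ^ (p - 1) :=
        lintegral_rpow_lintegral_mul_le (by fun_prop) (by unfold heatKernel; fun_prop) hp
    _ = ENNReal.ofReal ((2 * π) ^ (-(d : ℝ) * (p - 1) / 2) * p ^ (-(d : ℝ) / 2) *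
          (t ^ (1 - β) / (1 - β)) ^ p) := by
        rw [setLIntegral_congr_fun measurableSet_Ioc fun s hs => by
            rw [lintegral_ofReal_rpow_mul_heatKernel_rpow d hs.1 hp0],
          lintegral_mul_const _ (by fun_prop), hweight, ENNReal.ofReal_rpow_of_pos (by positivity),
          ← ENNReal.ofReal_mul (by positivity), ← ENNReal.ofReal_mul (by positivity),
          rpow_sub_one (by positivity)]
        congr 1
        field_simp
    _ = _ := by
        congr 1
        rw [div_rpow (by positivity) h1β_pos.le, ← rpow_mul ht.le, h1β,
          show (2 * p - d * (p - 1)) / (2 * p) * p = (2 * p - d * (p - 1)) / 2 by field_simp,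
          show 2 * p / (2 * p - d * (p - 1)) = ((2 * p - d * (p - 1)) / (2 * p))⁻¹ by
            rw [inv_div], Real.inv_rpow (by positivity)]
        ring

theorem stmt_17 (d : ℕ) (hd : 1 ≤ d) (p : ℝ) (hp : 1 ≤ p)
    (hpd : 0 < 2 * p - (d:ℝ) * (p - 1)) (t : ℝ) (ht : 0 < t) :
    ∫⁻ x : EuclideanSpace ℝ (Fin d),
        (∫⁻ s in Set.Ioc (0:ℝ) t,
          ENNReal.ofReal ((2 * Real.pi * s) ^ (-(d:ℝ) / 2) *
            Real.exp (-(‖x‖ ^ 2) / (2 * s)))) ^ p ∂(volume)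
      ≤ ENNReal.ofReal ((2 * Real.pi) ^ (-(d:ℝ) * (p - 1) / 2) *
          p ^ (-(d:ℝ) / 2) *
          (2 * p / (2 * p - (d:ℝ) * (p - 1))) ^ p *
          t ^ ((2 * p - (d:ℝ) * (p - 1)) / 2)) :=
  stmt_17_general d p hp hpd t ht
end
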